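/- arXiv:1201.3583 — 5 statements merged into one kernel-verified Lean document; each statement's English description precedes it below -/
import Mathlib

section
/- Let f : ℝ → ℝ be continuous and let I₀, I₁, …, Iₙ be closed intervals with Iₖ₊₁ ⊆ f(Iₖ) for 0 ≤ k < n and Iₙ = I₀. Then there exists a point x ∈ I₀ with fⁿ(x) = x and fᵏ(x) ∈ Iₖ for all 0 ≤ k ≤ n. -/
open Set

/-- For a continuous map and `p ≤ q`, there is a subinterval `[u,v] ⊆ [p,q]`
whose image is exactly the interval between `g p` and `g q`. -/
lemma exists_sub_Icc_aux (g : ℝ → ℝ) (hg : Continuous g) (p q : ℝ) (hpq : p ≤ q) :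
    ∃ u v, p ≤ u ∧ u ≤ v ∧ v ≤ q ∧ g '' Set.Icc u v = Set.uIcc (g p) (g q) := by
  set S : Set ℝ := Set.Icc p q ∩ {x | g x = g p} with hSdef
  have hScomp : IsCompact S :=
    isCompact_Icc.inter_right (isClosed_eq hg continuous_const)
  have hSne : S.Nonempty := ⟨p, ⟨le_refl p, hpq⟩, rfl⟩
  set u : ℝ := sSup S with hu
  have huS : u ∈ S := hScomp.sSup_mem hSne
  have hgu : g u = g p := huS.2
  have hupq : u ∈ Set.Icc p q := huS.1
  have hmaxu : ∀ y ∈ Set.Icc p q, g y = g p → y ≤ u :=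
    fun y hy hgy => le_csSup hScomp.bddAbove ⟨hy, hgy⟩
  set T : Set ℝ := Set.Icc u q ∩ {x | g x = g q} with hTdef
  have hTcomp : IsCompact T :=
    isCompact_Icc.inter_right (isClosed_eq hg continuous_const)
  have hTne : T.Nonempty := ⟨q, ⟨hupq.2, le_refl q⟩, rfl⟩
  set v : ℝ := sInf T with hv
  have hvT : v ∈ T := hTcomp.sInf_mem hTne
  have hgv : g v = g q := hvT.2
  have hvuq : v ∈ Set.Icc u q := hvT.1
  have hminv : ∀ y ∈ Set.Icc u q, g y = g q → v ≤ y :=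
    fun y hy hgy => csInf_le hTcomp.bddBelow ⟨hy, hgy⟩
  refine ⟨u, v, hupq.1, hvuq.1, hvuq.2, ?_⟩
  apply Set.Subset.antisymm
  · -- image ⊆ uIcc (g p) (g q)
    rintro _ ⟨x, hx, rfl⟩
    have hcont : ContinuousOn g (Set.uIcc x v) := hg.continuousOn
    have hcont2 : ContinuousOn g (Set.uIcc u x) := hg.continuousOn
    -- g x is either in [min,max], below both, or above both
    rcases lt_or_ge (g x) (min (g p) (g q)) with hlt | hge
    · exfalso
      have hxp : g x < g p := lt_of_lt_of_le hlt (min_le_left _ _)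
      have hxq : g x < g q := lt_of_lt_of_le hlt (min_le_right _ _)
      have hxu : u < x := lt_of_le_of_ne hx.1 (fun h => by rw [← h, hgu] at hxp; exact lt_irrefl _ hxp)
      have hxv : x < v := lt_of_le_of_ne hx.2 (fun h => by rw [h, hgv] at hxq; exact lt_irrefl _ hxq)
      rcases le_total (g p) (g q) with hor | hor
      · -- g p = min; find y ∈ [x,v] with g y = g p, contradicting maximality of u
        have : g p ∈ Set.uIcc (g x) (g v) := by
          rw [hgv, Set.mem_uIcc]; left; exact ⟨le_of_lt hxp, hor⟩
        obtain ⟨y, hy, hgy⟩ := intermediate_value_uIcc hcont this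
        rw [Set.uIcc_of_le (le_of_lt hxv)] at hy
        have hyu : y ≤ u := hmaxu y ⟨le_trans hupq.1 (le_trans (le_of_lt hxu) hy.1),
          le_trans hy.2 hvuq.2⟩ hgy
        exact absurd (lt_of_lt_of_le hxu hy.1) (not_lt.mpr hyu)
      · -- g q = min; find y ∈ [u,x] with g y = g q, contradicting minimality of v
        have : g q ∈ Set.uIcc (g u) (g x) := by
          rw [hgu, Set.mem_uIcc]; right; exact ⟨le_of_lt hxq, hor⟩
        obtain ⟨y, hy, hgy⟩ := intermediate_value_uIcc hcont2 this
        rw [Set.uIcc_of_le (le_of_lt hxu)] at hy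
        have hvy : v ≤ y := hminv y ⟨hy.1, le_trans hy.2 (le_trans hx.2 hvuq.2)⟩ hgy
        exact absurd (lt_of_le_of_lt hy.2 hxv) (not_lt.mpr hvy)
    rcases le_or_gt (g x) (max (g p) (g q)) with hle | hmax
    · rcases le_total (g p) (g q) with h | h
      · exact Set.mem_uIcc.mpr (Or.inl ⟨min_eq_left h ▸ hge, max_eq_right h ▸ hle⟩)
      · exact Set.mem_uIcc.mpr (Or.inr ⟨min_eq_right h ▸ hge, max_eq_left h ▸ hle⟩)
    · exfalso
      have hxp : g p < g x := lt_of_le_of_lt (le_max_left _ _) hmax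
      have hxq : g q < g x := lt_of_le_of_lt (le_max_right _ _) hmax
      have hxu : u < x := lt_of_le_of_ne hx.1 (fun h => by rw [← h, hgu] at hxp; exact lt_irrefl _ hxp)
      have hxv : x < v := lt_of_le_of_ne hx.2 (fun h => by rw [h, hgv] at hxq; exact lt_irrefl _ hxq)
      rcases le_total (g p) (g q) with hor | hor
      · -- g q = max; find y ∈ [u,x] with g y = g q, contradicting minimality of v
        have : g q ∈ Set.uIcc (g u) (g x) := by
          rw [hgu, Set.mem_uIcc]; left; exact ⟨hor, le_of_lt hxq⟩
        obtain ⟨y, hy, hgy⟩ := intermediate_value_uIcc hcont2 this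
        rw [Set.uIcc_of_le (le_of_lt hxu)] at hy
        have hvy : v ≤ y := hminv y ⟨hy.1, le_trans hy.2 (le_trans hx.2 hvuq.2)⟩ hgy
        exact absurd (lt_of_le_of_lt hy.2 hxv) (not_lt.mpr hvy)
      · -- g p = max; find y ∈ [x,v] with g y = g p, contradicting maximality of u
        have : g p ∈ Set.uIcc (g x) (g v) := by
          rw [hgv, Set.mem_uIcc]; right; exact ⟨hor, le_of_lt hxp⟩
        obtain ⟨y, hy, hgy⟩ := intermediate_value_uIcc hcont this
        rw [Set.uIcc_of_le (le_of_lt hxv)] at hy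
        have hyu : y ≤ u := hmaxu y ⟨le_trans hupq.1 (le_trans (le_of_lt hxu) hy.1),
          le_trans hy.2 hvuq.2⟩ hgy
        exact absurd (lt_of_lt_of_le hxu hy.1) (not_lt.mpr hyu)
  · -- uIcc (g p) (g q) ⊆ image
    have := intermediate_value_uIcc (f := g) (a := u) (b := v) hg.continuousOn
    rw [hgu, hgv, Set.uIcc_of_le hvuq.1] at this
    exact this

/-- If `[c,d] ⊆ g([a,b])`, there is `[u,v] ⊆ [a,b]` with `g([u,v]) = [c,d]`. -/
lemma exists_sub_Icc_image (g : ℝ → ℝ) (hg : Continuous g) (a b c d : ℝ) (hcd : c ≤ d)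
    (h : Set.Icc c d ⊆ g '' Set.Icc a b) :
    ∃ u v, u ≤ v ∧ Set.Icc u v ⊆ Set.Icc a b ∧ g '' Set.Icc u v = Set.Icc c d := by
  obtain ⟨p, hp, hgp⟩ := h (Set.left_mem_Icc.mpr hcd)
  obtain ⟨q, hq, hgq⟩ := h (Set.right_mem_Icc.mpr hcd)
  rcases le_total p q with h1 | h1
  · obtain ⟨u, v, hpu, huv, hvq, himg⟩ := exists_sub_Icc_aux g hg p q h1
    refine ⟨u, v, huv, Set.Icc_subset_Icc (le_trans hp.1 hpu) (le_trans hvq hq.2), ?_⟩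
    rw [himg, hgp, hgq, Set.uIcc_of_le hcd]
  · obtain ⟨u, v, hpu, huv, hvq, himg⟩ := exists_sub_Icc_aux g hg q p h1
    refine ⟨u, v, huv, Set.Icc_subset_Icc (le_trans hq.1 hpu) (le_trans hvq hp.2), ?_⟩
    rw [himg, hgp, hgq, Set.uIcc_comm, Set.uIcc_of_le hcd]

theorem itinerary_lemma (f : ℝ → ℝ) (hf : Continuous f) (n : ℕ)
    (I : ℕ → Set ℝ)
    (hI : ∀ k ≤ n, ∃ c d : ℝ, c ≤ d ∧ I k = Set.Icc c d)
    (hcyc : I n = I 0)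
    (hchain : ∀ k < n, I (k + 1) ⊆ f '' I k) :
    ∃ x ∈ I 0, f^[n] x = x ∧ ∀ k ≤ n, f^[k] x ∈ I k := by
  have key : ∀ m, m ≤ n → ∃ a b : ℝ, a ≤ b ∧ Set.Icc a b ⊆ I 0 ∧
      f^[m] '' Set.Icc a b = I m ∧ ∀ k ≤ m, f^[k] '' Set.Icc a b ⊆ I k := by
    intro m
    induction m with
    | zero =>
      intro _
      obtain ⟨c, d, hcd, h0⟩ := hI 0 (Nat.zero_le _)
      refine ⟨c, d, hcd, by rw [h0], by simp [h0], ?_⟩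
      intro k hk
      interval_cases k
      simp [h0]
    | succ m ih =>
      intro hm
      obtain ⟨a, b, hab, hI0, himg, hall⟩ := ih (le_of_lt (Nat.lt_of_succ_le hm))
      obtain ⟨c, d, hcd, hIm1⟩ := hI (m + 1) hm
      have hsub : Set.Icc c d ⊆ f^[m + 1] '' Set.Icc a b := by
        rw [Function.iterate_succ', Set.image_comp, himg, ← hIm1]
        exact hchain m (Nat.lt_of_succ_le hm)
      obtain ⟨u, v, huv, hsubI, himg'⟩ :=
        exists_sub_Icc_image (f^[m + 1]) (hf.iterate (m + 1)) a b c d hcd hsub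
      refine ⟨u, v, huv, fun x hx => hI0 (hsubI hx), by rw [himg', hIm1], ?_⟩
      intro k hk
      rcases eq_or_lt_of_le hk with rfl | hk'
      · rw [himg', hIm1]
      · exact le_trans (Set.image_mono hsubI) (hall k (Nat.lt_succ_iff.mp hk'))
  obtain ⟨a, b, hab, hI0, himg, hall⟩ := key n le_rfl
  have hcover : Set.Icc a b ⊆ f^[n] '' Set.Icc a b := by
    rw [himg, hcyc]; exact hI0
  obtain ⟨p, hp, hfp⟩ := hcover (Set.left_mem_Icc.mpr hab)
  obtain ⟨q, hq, hfq⟩ := hcover (Set.right_mem_Icc.mpr hab)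
  have hc : Continuous fun x => f^[n] x - x := (hf.iterate n).sub continuous_id
  have h0 : (0 : ℝ) ∈ Set.uIcc (f^[n] p - p) (f^[n] q - q) := by
    rw [Set.mem_uIcc]
    left
    constructor
    · rw [hfp]; linarith [hp.1]
    · rw [hfq]; linarith [hq.2]
  obtain ⟨x, hx, hgx⟩ := intermediate_value_uIcc (f := fun x => f^[n] x - x)
    hc.continuousOn h0
  have hxab : x ∈ Set.Icc a b := by
    rcases le_total p q with h | h
    · rw [Set.uIcc_of_le h] at hx
      exact ⟨le_trans hp.1 hx.1, le_trans hx.2 hq.2⟩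
    · rw [Set.uIcc_of_ge h] at hx
      exact ⟨le_trans hq.1 hx.1, le_trans hx.2 hp.2⟩
  have hfix : f^[n] x = x := by
    have h := hgx.symm
    simp only at h
    linarith
  exact ⟨x, hI0 hxab, hfix, fun k hk => hall k hk ⟨x, hxab, rfl⟩⟩
end

section
/- Let f : ℝ → ℝ be continuous. Suppose there exist real numbers a, b, c with f(b) ≤ c < b < a, f(a) = a, and a ≤ f(c). Then for every positive integer m, f has a periodic point of least period m. -/
open Set

lemma horseshoe_key (f : ℝ → ℝ) (hf : Continuous f) (s t A B : ℝ) (hst : s ≤ t)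
    (hA : f s = A) (hB : f t = B) :
    ∃ u v, s ≤ u ∧ u ≤ v ∧ v ≤ t ∧ f u = A ∧ f v = B ∧
      ∀ x ∈ Set.Icc u v, f x ∈ Set.Icc (min A B) (max A B) := by
  classical
  set S : Set ℝ := Set.Icc s t ∩ f ⁻¹' {B} with hSdef
  have hScomp : IsCompact S :=
    isCompact_Icc.inter_right (isClosed_singleton.preimage hf)
  have hSne : S.Nonempty := ⟨t, ⟨⟨hst, le_rfl⟩, hB⟩⟩
  set v := sInf S with hvdef
  have hvS : v ∈ S := hScomp.sInf_mem hSne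
  have hfv : f v = B := hvS.2
  have hsv : s ≤ v := hvS.1.1
  have hvt : v ≤ t := hvS.1.2
  set T : Set ℝ := Set.Icc s v ∩ f ⁻¹' {A} with hTdef
  have hTcomp : IsCompact T :=
    isCompact_Icc.inter_right (isClosed_singleton.preimage hf)
  have hTne : T.Nonempty := ⟨s, ⟨⟨le_rfl, hsv⟩, hA⟩⟩
  set u := sSup T with hudef
  have huT : u ∈ T := hTcomp.sSup_mem hTne
  have hfu : f u = A := huT.2
  have hsu : s ≤ u := huT.1.1
  have huv : u ≤ v := huT.1.2
  refine ⟨u, v, hsu, huv, hvt, hfu, hfv, ?_⟩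
  intro x hx
  by_contra hcon
  obtain ⟨hux, hxv⟩ := hx
  have hcon' : f x < min A B ∨ max A B < f x := by
    rcases lt_or_ge (f x) (min A B) with h | h
    · exact Or.inl h
    rcases le_or_gt (f x) (max A B) with h' | h'
    · exact absurd ⟨h, h'⟩ hcon
    · exact Or.inr h'
  have hSle : ∀ y, y ∈ Set.Icc u x → f y = B → False := by
    intro y hy hyB
    have hyS : y ∈ S := ⟨⟨hsu.trans hy.1, (hy.2.trans hxv).trans hvt⟩, hyB⟩
    have hvy : v ≤ y := csInf_le hScomp.bddBelow hyS
    have hxveq : x = v := le_antisymm hxv (hvy.trans hy.2)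
    rcases hcon' with h | h
    · rw [hxveq, hfv] at h; exact absurd (min_le_right A B) (not_le.mpr h)
    · rw [hxveq, hfv] at h; exact absurd (le_max_right A B) (not_le.mpr h)
  have hTle : ∀ z, z ∈ Set.Icc x v → f z = A → False := by
    intro z hz hzA
    have hzT : z ∈ T := ⟨⟨hsu.trans (hux.trans hz.1), hz.2⟩, hzA⟩
    have hzu : z ≤ u := le_csSup hTcomp.bddAbove hzT
    have hxueq : x = u := le_antisymm (hz.1.trans hzu) hux
    rcases hcon' with h | h
    · rw [hxueq, hfu] at h; exact absurd (min_le_left A B) (not_le.mpr h)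
    · rw [hxueq, hfu] at h; exact absurd (le_max_left A B) (not_le.mpr h)
  rcases hcon' with hlow | hhigh
  · rcases le_total A B with hAB | hBA
    · have hmem : A ∈ f '' Set.Icc x v := by
        apply intermediate_value_Icc hxv hf.continuousOn
        rw [hfv]
        exact ⟨le_of_lt (lt_of_lt_of_le hlow (min_le_left A B)), hAB⟩
      obtain ⟨z, hz, hzA⟩ := hmem
      exact hTle z hz hzA
    · have hmem : B ∈ f '' Set.Icc u x := by
        apply intermediate_value_Icc' hux hf.continuousOn
        rw [hfu]
        exact ⟨le_of_lt (lt_of_lt_of_le hlow (min_le_right A B)), hBA⟩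
      obtain ⟨y, hy, hyB⟩ := hmem
      exact hSle y hy hyB
  · rcases le_total A B with hAB | hBA
    · have hmem : B ∈ f '' Set.Icc u x := by
        apply intermediate_value_Icc hux hf.continuousOn
        rw [hfu]
        exact ⟨hAB, le_of_lt (lt_of_le_of_lt (le_max_right A B) hhigh)⟩
      obtain ⟨y, hy, hyB⟩ := hmem
      exact hSle y hy hyB
    · have hmem : A ∈ f '' Set.Icc x v := by
        apply intermediate_value_Icc' hxv hf.continuousOn
        rw [hfv]
        exact ⟨hBA, le_of_lt (lt_of_le_of_lt (le_max_left A B) hhigh)⟩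
      obtain ⟨z, hz, hzA⟩ := hmem
      exact hTle z hz hzA

lemma horseshoe_cover (f : ℝ → ℝ) (hf : Continuous f) (p q α β : ℝ)
    (hαβ : α ≤ β)
    (hs : ∃ s ∈ Set.Icc p q, f s = α) (ht : ∃ t ∈ Set.Icc p q, f t = β) :
    ∃ u v, p ≤ u ∧ u ≤ v ∧ v ≤ q ∧
      (∀ x ∈ Set.Icc u v, f x ∈ Set.Icc α β) ∧
      ((f u = α ∧ f v = β) ∨ (f u = β ∧ f v = α)) := by
  obtain ⟨s, hs1, hs2⟩ := hs
  obtain ⟨t, ht1, ht2⟩ := ht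
  rcases le_total s t with hst | hts
  · obtain ⟨u, v, k1, k2, k3, k4, k5, k6⟩ := horseshoe_key f hf s t α β hst hs2 ht2
    refine ⟨u, v, hs1.1.trans k1, k2, k3.trans ht1.2, ?_, Or.inl ⟨k4, k5⟩⟩
    intro x hx
    have h := k6 x hx
    rwa [min_eq_left hαβ, max_eq_right hαβ] at h
  · obtain ⟨u, v, k1, k2, k3, k4, k5, k6⟩ := horseshoe_key f hf t s β α hts ht2 hs2
    refine ⟨u, v, ht1.1.trans k1, k2, k3.trans hs1.2, ?_, Or.inr ⟨k4, k5⟩⟩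
    intro x hx
    have h := k6 x hx
    rwa [min_eq_right hαβ, max_eq_left hαβ] at h

lemma horseshoe_chain (f : ℝ → ℝ) (hf : Continuous f) (a b c : ℝ)
    (h1 : f b ≤ c) (h2 : c < b) (h3 : b < a) (h4 : f a = a) :
    ∀ n : ℕ, ∃ u v, b ≤ u ∧ u ≤ v ∧ v ≤ a ∧
      (∀ x ∈ Set.Icc u v, ∀ i ≤ n, f^[i] x ∈ Set.Icc b a) ∧
      (∀ x ∈ Set.Icc u v, f^[n+1] x ∈ Set.Icc c b) ∧
      ((f^[n+1] u = c ∧ f^[n+1] v = b) ∨ (f^[n+1] u = b ∧ f^[n+1] v = c)) := by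
  have hmem : ∀ y, c ≤ y → y ≤ a → ∃ s ∈ Set.Icc b a, f s = y := by
    intro y hy1 hy2
    have h : y ∈ f '' Set.Icc b a := by
      apply intermediate_value_Icc h3.le hf.continuousOn
      rw [h4]; exact ⟨h1.trans hy1, hy2⟩
    obtain ⟨s, hs, hfs⟩ := h
    exact ⟨s, hs, hfs⟩
  intro n
  induction n with
  | zero =>
    obtain ⟨u, v, g1, g2, g3, g4, g5⟩ :=
      horseshoe_cover f hf b a c b h2.le (hmem c le_rfl (h2.trans h3).le)
        (hmem b h2.le h3.le)
    refine ⟨u, v, g1, g2, g3, ?_, ?_, ?_⟩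
    · intro x hx i hi
      have hi0 : i = 0 := Nat.le_zero.mp hi
      subst hi0
      simpa using Set.mem_Icc.mpr ⟨g1.trans hx.1, hx.2.trans g3⟩
    · intro x hx
      simpa using g4 x hx
    · simpa using g5
  | succ n ih =>
    obtain ⟨u, v, g1, g2, g3, g4, g5, g6⟩ := ih
    obtain ⟨u', v', k1, k2, k3, k4, k5⟩ :=
      horseshoe_cover f hf b a u v g2
        (hmem u (h2.le.trans g1) (g2.trans g3))
        (hmem v (h2.le.trans (g1.trans g2)) g3)
    refine ⟨u', v', k1, k2, k3, ?_, ?_, ?_⟩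
    · intro x hx i hi
      match i, hi with
      | 0, _ => simpa using Set.mem_Icc.mpr ⟨k1.trans hx.1, hx.2.trans k3⟩
      | (j+1), hj =>
        rw [Function.iterate_succ_apply]
        exact g4 (f x) (k4 x hx) j (Nat.succ_le_succ_iff.mp hj)
    · intro x hx
      rw [Function.iterate_succ_apply]
      exact g5 (f x) (k4 x hx)
    · have hi2 : ∀ y, f^[n+1+1] y = f^[n+1] (f y) := fun y =>
        Function.iterate_succ_apply f (n+1) y
      rcases k5 with ⟨ku, kv⟩ | ⟨ku, kv⟩
      · rw [hi2 u', hi2 v', ku, kv]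
        exact g6
      · rw [hi2 u', hi2 v', ku, kv]
        rcases g6 with ⟨e1, e2⟩ | ⟨e1, e2⟩
        · exact Or.inr ⟨e2, e1⟩
        · exact Or.inl ⟨e2, e1⟩

theorem horseshoe_all_periods (f : ℝ → ℝ) (hf : Continuous f)
    (a b c : ℝ) (h1 : f b ≤ c) (h2 : c < b) (h3 : b < a)
    (h4 : f a = a) (h5 : a ≤ f c) :
    ∀ m : ℕ, 0 < m →
      ∃ x : ℝ, f^[m] x = x ∧ ∀ k : ℕ, 0 < k → k < m → f^[k] x ≠ x := by
  intro m hm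
  rcases Nat.lt_or_ge m 2 with hm2 | hm2
  · have hm1 : m = 1 := by omega
    subst hm1
    exact ⟨a, by simpa using h4, fun k hk hk' => absurd hk (by omega)⟩
  · obtain ⟨n, rfl⟩ : ∃ n, m = n + 2 := ⟨m - 2, by omega⟩
    obtain ⟨u, v, g1, g2, g3, g4, g5, g6⟩ := horseshoe_chain f hf a b c h1 h2 h3 h4 n
    have hmemI : ∀ y, b ≤ y → y ≤ a → ∃ s ∈ Set.Icc c b, f s = y := by
      intro y hy1 hy2
      have h : y ∈ f '' Set.Icc c b := by
        apply intermediate_value_Icc' h2.le hf.continuousOn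
        exact ⟨h1.trans (h2.le.trans hy1), hy2.trans h5⟩
      obtain ⟨s, hs, hfs⟩ := h
      exact ⟨s, hs, hfs⟩
    obtain ⟨p, q, k1, k2, k3, k4, k5⟩ :=
      horseshoe_cover f hf c b u v g2 (hmemI u g1 (g2.trans g3)) (hmemI v (g1.trans g2) g3)
    have hiter : ∀ x, f^[n+2] x = f^[n+1] (f x) := fun x =>
      Function.iterate_succ_apply f (n+1) x
    have hend : (f^[n+2] p = c ∧ f^[n+2] q = b) ∨ (f^[n+2] p = b ∧ f^[n+2] q = c) := by
      rcases k5 with ⟨e1, e2⟩ | ⟨e1, e2⟩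
      · rw [hiter, hiter, e1, e2]; exact g6
      · rw [hiter, hiter, e1, e2]
        rcases g6 with ⟨d1, d2⟩ | ⟨d1, d2⟩
        · exact Or.inr ⟨d2, d1⟩
        · exact Or.inl ⟨d2, d1⟩
    have hgcont : Continuous fun x => f^[n+2] x - x := (hf.iterate (n+2)).sub continuous_id
    have hfix : ∃ x ∈ Set.Icc p q, f^[n+2] x = x := by
      rcases hend with ⟨e1, e2⟩ | ⟨e1, e2⟩
      · have h0 : (0:ℝ) ∈ Set.Icc (f^[n+2] p - p) (f^[n+2] q - q) := by
          rw [e1, e2]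
          exact Set.mem_Icc.mpr ⟨by linarith [k1], by linarith [k3]⟩
        obtain ⟨x, hx, hx0⟩ := intermediate_value_Icc k2 hgcont.continuousOn h0
        exact ⟨x, hx, by simp only at hx0; linarith⟩
      · have h0 : (0:ℝ) ∈ Set.Icc (f^[n+2] q - q) (f^[n+2] p - p) := by
          rw [e1, e2]
          exact Set.mem_Icc.mpr ⟨by linarith [k3], by linarith [k1]⟩
        obtain ⟨x, hx, hx0⟩ := intermediate_value_Icc' k2 hgcont.continuousOn h0
        exact ⟨x, hx, by simp only at hx0; linarith⟩
    obtain ⟨x, hxpq, hxfix⟩ := hfix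
    have hxI : x ∈ Set.Icc c b := ⟨k1.trans hxpq.1, hxpq.2.trans k3⟩
    have hfxJ : f x ∈ Set.Icc u v := k4 x hxpq
    refine ⟨x, hxfix, ?_⟩
    intro k hk hkm
    obtain ⟨j, rfl⟩ : ∃ j, k = j + 1 := ⟨k - 1, by omega⟩
    have hj : j ≤ n := by omega
    have hJ : f^[j+1] x ∈ Set.Icc b a := by
      rw [Function.iterate_succ_apply]
      exact g4 (f x) hfxJ j hj
    intro heq
    rw [heq] at hJ
    have hxb : x = b := le_antisymm hxI.2 hJ.1
    have hbf : b ≤ f x := g1.trans hfxJ.1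
    rw [hxb] at hbf
    linarith
end

section
/- Let f : ℝ → ℝ be continuous with a periodic point of least period 3. Then for every positive integer m, f has a periodic point of least period m. -/
open Set

private lemma iter_neg (f : ℝ → ℝ) : ∀ (k : ℕ) (z : ℝ),
    (fun t => -f (-t))^[k] z = - f^[k] (-z) := by
  intro k
  induction k with
  | zero => intro z; simp
  | succ n ih =>
      intro z
      rw [Function.iterate_succ_apply, Function.iterate_succ_apply, ih]
      simp

/-- If a continuous `f` sends `c ↦ p` and `d ↦ q` with `c ≤ d`, `p ≤ q`, then there is a
subinterval of `[c,d]` mapped into `[p,q]` with endpoints going exactly to `p` and `q`. -/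
private lemma key_aux (f : ℝ → ℝ) (hf : Continuous f) {c d p q : ℝ} (hcd : c ≤ d)
    (hpq : p ≤ q) (hc : f c = p) (hd : f d = q) :
    ∃ u' v', c ≤ u' ∧ u' ≤ v' ∧ v' ≤ d ∧ f u' = p ∧ f v' = q ∧
      ∀ t ∈ Icc u' v', f t ∈ Icc p q := by
  classical
  set S : Set ℝ := Icc c d ∩ f ⁻¹' {p} with hS
  have hSc : IsClosed S := isClosed_Icc.inter (isClosed_singleton.preimage hf)
  have hSne : S.Nonempty := ⟨c, ⟨le_refl c, hcd⟩, by simp [hc]⟩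
  have hSbdd : BddAbove S := BddAbove.mono (fun t ht => ht.1) bddAbove_Icc
  set u' := sSup S with hu'
  have hu'S : u' ∈ S := hSc.csSup_mem hSne hSbdd
  have hfu' : f u' = p := hu'S.2
  have hcu' : c ≤ u' := hu'S.1.1
  have hu'd : u' ≤ d := hu'S.1.2
  set T : Set ℝ := Icc u' d ∩ f ⁻¹' {q} with hT
  have hTc : IsClosed T := isClosed_Icc.inter (isClosed_singleton.preimage hf)
  have hTne : T.Nonempty := ⟨d, ⟨hu'd, le_refl d⟩, by simp [hd]⟩
  have hTbdd : BddBelow T := BddBelow.mono (fun t ht => ht.1) bddBelow_Icc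
  set v' := sInf T with hv'
  have hv'T : v' ∈ T := hTc.csInf_mem hTne hTbdd
  have hfv' : f v' = q := hv'T.2
  have hu'v' : u' ≤ v' := hv'T.1.1
  have hv'd : v' ≤ d := hv'T.1.2
  refine ⟨u', v', hcu', hu'v', hv'd, hfu', hfv', ?_⟩
  intro t ht
  constructor
  · by_contra hlt
    push_neg at hlt
    have hcont : ContinuousOn f (Icc t v') := hf.continuousOn
    have : p ∈ Icc (f t) (f v') := ⟨hlt.le, by rw [hfv']; exact hpq⟩
    obtain ⟨s, hs, hfs⟩ := intermediate_value_Icc ht.2 hcont this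
    have hsS : s ∈ S := ⟨⟨le_trans hcu' (le_trans ht.1 hs.1), le_trans hs.2 hv'd⟩, by simp [hfs]⟩
    have h1 : s ≤ u' := le_csSup hSbdd hsS
    have h2 : u' ≤ s := le_trans ht.1 hs.1
    have : t = u' := le_antisymm (le_antisymm h1 h2 ▸ hs.1) ht.1
    rw [this, hfu'] at hlt
    exact absurd hlt (lt_irrefl p)
  · by_contra hlt
    push_neg at hlt
    have hcont : ContinuousOn f (Icc u' t) := hf.continuousOn
    have : q ∈ Icc (f u') (f t) := ⟨by rw [hfu']; exact hpq, hlt.le⟩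
    obtain ⟨s, hs, hfs⟩ := intermediate_value_Icc ht.1 hcont this
    have hsT : s ∈ T := ⟨⟨hs.1, le_trans (le_trans hs.2 ht.2) hv'd⟩, by simp [hfs]⟩
    have h1 : v' ≤ s := csInf_le hTbdd hsT
    have h2 : s ≤ v' := le_trans hs.2 ht.2
    have : t = v' := le_antisymm ht.2 (le_antisymm h2 h1 ▸ hs.2)
    rw [this, hfv'] at hlt
    exact absurd hlt (lt_irrefl q)

/-- Covering lemma: if `p, q` are in the image of `[u,v]`, we can find a subinterval
mapped into `[p,q]` whose endpoints map onto `{p, q}`. -/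
private lemma key (f : ℝ → ℝ) (hf : Continuous f) {u v p q : ℝ} (hpq : p ≤ q)
    (hp : ∃ s ∈ Icc u v, f s = p) (hq : ∃ s ∈ Icc u v, f s = q) :
    ∃ u' v', u ≤ u' ∧ u' ≤ v' ∧ v' ≤ v ∧
      ((f u' = p ∧ f v' = q) ∨ (f u' = q ∧ f v' = p)) ∧
      ∀ t ∈ Icc u' v', f t ∈ Icc p q := by
  obtain ⟨cc, hcc, hfc⟩ := hp
  obtain ⟨dd, hdd, hfd⟩ := hq
  rcases le_total cc dd with hcd | hdc
  · obtain ⟨u', v', h1, h2, h3, h4, h5, h6⟩ := key_aux f hf hcd hpq hfc hfd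
    exact ⟨u', v', le_trans hcc.1 h1, h2, le_trans h3 hdd.2, Or.inl ⟨h4, h5⟩, h6⟩
  · -- use the reflected map  t ↦ f (-t)
    have hg : Continuous (fun t => f (-t)) := hf.comp continuous_neg
    have hcd' : -cc ≤ -dd := neg_le_neg hdc
    obtain ⟨u'', v'', h1, h2, h3, h4, h5, h6⟩ :=
      key_aux (fun t => f (-t)) hg hcd' hpq (by simpa using hfc) (by simpa using hfd)
    refine ⟨-v'', -u'', ?_, neg_le_neg h2, ?_, Or.inr ⟨by simpa using h5, by simpa using h4⟩, ?_⟩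
    · have : v'' ≤ -dd := h3
      have := neg_le_neg this
      simp only [neg_neg] at this
      exact le_trans hdd.1 this
    · have : -cc ≤ u'' := h1
      have := neg_le_neg this
      simp only [neg_neg] at this
      exact le_trans this hcc.2
    · intro t ht
      have : -t ∈ Icc u'' v'' := ⟨by simpa using neg_le_neg ht.2, by simpa using neg_le_neg ht.1⟩
      simpa using h6 (-t) this

/-- Core case: a 3-cycle `a ↦ b ↦ c ↦ a` with `a < b < c` gives periodic points of
all least periods. -/
private lemma core (f : ℝ → ℝ) (hf : Continuous f) {a b c : ℝ} (hab : a < b) (hbc : b < c)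
    (ha : f a = b) (hb : f b = c) (hc : f c = a) :
    ∀ m : ℕ, 0 < m → ∃ y, f^[m] y = y ∧ ∀ k, 0 < k → k < m → f^[k] y ≠ y := by
  have hac : a < c := hab.trans hbc
  -- every point of [a,c] is attained by f on [b,c]
  have himage : ∀ z ∈ Icc a c, ∃ s ∈ Icc b c, f s = z := by
    intro z hz
    have : z ∈ Icc (f c) (f b) := by rw [hb, hc]; exact hz
    obtain ⟨s, hs, hfs⟩ := intermediate_value_Icc' hbc.le hf.continuousOn this
    exact ⟨s, hs, hfs⟩
  -- nested-interval construction
  have hP : ∀ n : ℕ, ∃ α β, b ≤ α ∧ α ≤ β ∧ β ≤ c ∧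
      (∀ k ≤ n, ∀ t ∈ Icc α β, f^[k] t ∈ Icc b c) ∧
      (∀ t ∈ Icc α β, f^[n+1] t ∈ Icc a b) ∧
      ((f^[n+1] α = a ∧ f^[n+1] β = b) ∨ (f^[n+1] α = b ∧ f^[n+1] β = a)) := by
    intro n
    induction n with
    | zero =>
        obtain ⟨α, β, h1, h2, h3, h4, h5⟩ :=
          key f hf hab.le (himage a ⟨le_refl a, hac.le⟩) (himage b ⟨hab.le, hbc.le⟩)
        refine ⟨α, β, h1, h2, h3, ?_, ?_, ?_⟩
        · intro k hk t ht
          interval_cases k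
          exact ⟨le_trans h1 ht.1, le_trans ht.2 h3⟩
        · intro t ht; simpa using h5 t ht
        · simpa using h4
    | succ n ih =>
        obtain ⟨α', β', h1', h2', h3', h4', h5', h6'⟩ := ih
        obtain ⟨α, β, h1, h2, h3, h4, h5⟩ :=
          key f hf h2' (himage α' ⟨le_trans hab.le h1', le_trans h2' h3'⟩)
            (himage β' ⟨le_trans hab.le (le_trans h1' h2'), h3'⟩)
        have hmap : ∀ t ∈ Icc α β, f t ∈ Icc α' β' := h5
        refine ⟨α, β, h1, h2, h3, ?_, ?_, ?_⟩
        · intro k hk t ht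
          match k with
          | 0 => exact ⟨le_trans h1 ht.1, le_trans ht.2 h3⟩
          | (j+1) =>
              rw [Function.iterate_succ_apply]
              exact h4' j (by omega) (f t) (hmap t ht)
        · intro t ht
          rw [Function.iterate_succ_apply]
          exact h5' (f t) (hmap t ht)
        · have hαm : α ∈ Icc α β := ⟨le_refl α, h2⟩
          have hβm : β ∈ Icc α β := ⟨h2, le_refl β⟩
          rcases h4 with ⟨e1, e2⟩ | ⟨e1, e2⟩ <;> rcases h6' with ⟨e3, e4⟩ | ⟨e3, e4⟩
          · exact Or.inl ⟨by rw [Function.iterate_succ_apply, e1, e3],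
              by rw [Function.iterate_succ_apply, e2, e4]⟩
          · exact Or.inr ⟨by rw [Function.iterate_succ_apply, e1, e3],
              by rw [Function.iterate_succ_apply, e2, e4]⟩
          · exact Or.inr ⟨by rw [Function.iterate_succ_apply, e1, e4],
              by rw [Function.iterate_succ_apply, e2, e3]⟩
          · exact Or.inl ⟨by rw [Function.iterate_succ_apply, e1, e4],
              by rw [Function.iterate_succ_apply, e2, e3]⟩
  intro m hm
  match m with
  | 1 =>
      -- fixed point in [b,c]
      have hcont : ContinuousOn (fun t => f t - t) (Icc b c) :=
        (hf.sub continuous_id).continuousOn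
      have h0 : (0:ℝ) ∈ Icc (f c - c) (f b - b) := by
        rw [hb, hc]
        constructor
        · linarith
        · linarith
      obtain ⟨y, hy, hfy⟩ := intermediate_value_Icc' hbc.le hcont h0
      refine ⟨y, ?_, ?_⟩
      · simp only [Function.iterate_one]
        have : f y - y = 0 := hfy
        linarith
      · intro k hk1 hk2; omega
  | (n+2) =>
      obtain ⟨α, β, h1, h2, h3, h4, h5, h6⟩ := hP n
      -- f^[n+2] sends α, β to {b, c}
      have hstep : ∀ t, f^[n+2] t = f (f^[n+1] t) := by
        intro t; rw [Function.iterate_succ_apply']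
      have hy : ∃ y ∈ Icc α β, f^[n+2] y = y := by
        have hcont : ContinuousOn (fun t => f^[n+2] t - t) (Icc α β) :=
          ((hf.iterate (n+2)).sub continuous_id).continuousOn
        rcases h6 with ⟨e1, e2⟩ | ⟨e1, e2⟩
        · have hA : f^[n+2] α = b := by rw [hstep, e1, ha]
          have hB : f^[n+2] β = c := by rw [hstep, e2, hb]
          have h0 : (0:ℝ) ∈ Icc (f^[n+2] α - α) (f^[n+2] β - β) := by
            rw [hA, hB]; constructor
            · linarith
            · linarith
          obtain ⟨y, hy, hfy⟩ := intermediate_value_Icc h2 hcont h0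
          refine ⟨y, hy, ?_⟩
          have he : f^[n+2] y = f^[n] (f (f y)) := by
            rw [Function.iterate_succ_apply, Function.iterate_succ_apply]
          dsimp at hfy
          rw [he]; linarith
        · have hA : f^[n+2] α = c := by rw [hstep, e1, hb]
          have hB : f^[n+2] β = b := by rw [hstep, e2, ha]
          have h0 : (0:ℝ) ∈ Icc (f^[n+2] β - β) (f^[n+2] α - α) := by
            rw [hA, hB]; constructor
            · linarith
            · linarith
          obtain ⟨y, hy, hfy⟩ := intermediate_value_Icc' h2 hcont h0
          refine ⟨y, hy, ?_⟩
          have he : f^[n+2] y = f^[n] (f (f y)) := by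
            rw [Function.iterate_succ_apply, Function.iterate_succ_apply]
          dsimp at hfy
          rw [he]; linarith
      obtain ⟨y, hymem, hyfix⟩ := hy
      refine ⟨y, hyfix, ?_⟩
      intro k hk0 hkm heq
      -- y is periodic with period k; deduce f^[n+1] y = b, hence y = c
      have hper : Function.IsPeriodicPt f k y := heq
      have hr : f^[(n+1) % k] y = f^[n+1] y := hper.iterate_mod_apply (n+1)
      have hrk : (n+1) % k ≤ n := by
        have := Nat.mod_lt (n+1) hk0
        omega
      have hbc1 : f^[(n+1) % k] y ∈ Icc b c := h4 _ hrk y hymem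
      have hab1 : f^[n+1] y ∈ Icc a b := h5 y hymem
      have hyb : f^[n+1] y = b := le_antisymm hab1.2 (hr ▸ hbc1.1)
      have hyc : y = c := by rw [← hyfix, hstep, hyb, hb]
      match n, hkm with
      | 0, _ =>
          -- k = 1 : f c = c is false
          have hk1 : k = 1 := by omega
          rw [hk1] at heq
          simp only [Function.iterate_one] at heq
          rw [hyc, hc] at heq
          exact absurd heq hac.ne
      | (j+1), _ =>
          -- f y = a must lie in [b,c], contradiction
          have h1y : f^[1] y ∈ Icc b c := h4 1 (by omega) y hymem
          simp only [Function.iterate_one] at h1y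
          rw [hyc, hc] at h1y
          exact absurd h1y.1 (not_le.mpr hab)

/-- Mirror-image case: `p ↦ r ↦ q ↦ p` with `p < q < r`. -/
private lemma coreB (f : ℝ → ℝ) (hf : Continuous f) {p q r : ℝ} (hpq : p < q) (hqr : q < r)
    (hp : f p = r) (hr : f r = q) (hq : f q = p) :
    ∀ m : ℕ, 0 < m → ∃ y, f^[m] y = y ∧ ∀ k, 0 < k → k < m → f^[k] y ≠ y := by
  set g : ℝ → ℝ := fun t => -f (-t) with hg
  have hgc : Continuous g := (hf.comp continuous_neg).neg
  have h1 : g (-r) = -q := by simp [hg, hr]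
  have h2 : g (-q) = -p := by simp [hg, hq]
  have h3 : g (-p) = -r := by simp [hg, hp]
  intro m hm
  obtain ⟨y, hyfix, hymin⟩ :=
    core g hgc (neg_lt_neg hqr) (neg_lt_neg hpq) h1 h2 h3 m hm
  refine ⟨-y, ?_, ?_⟩
  · have h := iter_neg f m y
    rw [← hg] at h
    rw [h] at hyfix
    linarith [hyfix]
  · intro k hk0 hkm hcon
    apply hymin k hk0 hkm
    have h := iter_neg f k y
    rw [← hg] at h
    rw [h, hcon]
    ring

theorem period_three_implies_all_periods (f : ℝ → ℝ) (hf : Continuous f)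
    (x : ℝ) (hx : f^[3] x = x) (hx' : ∀ k : ℕ, 0 < k → k < 3 → f^[k] x ≠ x) :
    ∀ m : ℕ, 0 < m →
      ∃ y : ℝ, f^[m] y = y ∧ ∀ k : ℕ, 0 < k → k < m → f^[k] y ≠ y := by
  set x1 := f x with hx1
  set x2 := f x1 with hx2
  have hfx2 : f x2 = x := by
    have : f^[3] x = f (f (f x)) := by
      simp [Function.iterate_succ_apply']
    rw [← hx1, ← hx2] at this
    rw [← this, hx]
  have hne1 : x1 ≠ x := by
    have := hx' 1 (by norm_num) (by norm_num)
    simpa using this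
  have hne2 : x2 ≠ x := by
    have := hx' 2 (by norm_num) (by norm_num)
    simpa [Function.iterate_succ_apply', hx1, hx2] using this
  have hne3 : x2 ≠ x1 := by
    intro h
    apply hne2
    calc x2 = f x1 := hx2
    _ = f x2 := by rw [h]
    _ = x := hfx2
  rcases lt_trichotomy x x1 with h01 | h01 | h01
  · rcases lt_trichotomy x1 x2 with h12 | h12 | h12
    · -- x < x1 < x2 : form A
      exact core f hf h01 h12 rfl rfl hfx2
    · exact absurd h12.symm hne3
    · rcases lt_trichotomy x x2 with h02 | h02 | h02
      · -- x < x2 < x1 : form B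
        exact coreB f hf h02 h12 rfl rfl hfx2
      · exact absurd h02.symm hne2
      · -- x2 < x < x1 : form A with (x2, x, x1)
        exact core f hf h02 h01 hfx2 rfl rfl
  · exact absurd h01.symm hne1
  · rcases lt_trichotomy x1 x2 with h12 | h12 | h12
    · rcases lt_trichotomy x x2 with h02 | h02 | h02
      · -- x1 < x < x2 : form B with (x1, x, x2)
        exact coreB f hf h01 h02 rfl hfx2 rfl
      · exact absurd h02.symm hne2
      · -- x1 < x2 < x : form A with (x1, x2, x)
        exact core f hf h12 h02 rfl hfx2 rfl
    · exact absurd h12.symm hne3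
    · -- x2 < x1 < x : form B with (x2, x1, x)
      exact coreB f hf h12 h01 hfx2 rfl rfl
end

section
/- Let f : ℝ → ℝ be continuous with a periodic point of least period n, where n is not a power of 2 (equivalently, n has an odd factor > 1). Then for every k ≥ 0, f has a periodic point of least period 2^k. -/
open Set

/-- IVT: a zero on [a,b] when g goes from ≥0 to ≤0. -/
lemma ivt_down {g : ℝ → ℝ} (hg : Continuous g) {a b : ℝ} (hab : a ≤ b)
    (ha : 0 ≤ g a) (hb : g b ≤ 0) : ∃ s ∈ Set.Icc a b, g s = 0 := by
  obtain ⟨s, hs, h⟩ := intermediate_value_Icc' hab hg.continuousOn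
    (⟨hb, ha⟩ : (0:ℝ) ∈ Icc (g b) (g a))
  exact ⟨s, hs, h⟩

/-- IVT: a zero on [a,b] when g goes from ≤0 to ≥0. -/
lemma ivt_up {g : ℝ → ℝ} (hg : Continuous g) {a b : ℝ} (hab : a ≤ b)
    (ha : g a ≤ 0) (hb : 0 ≤ g b) : ∃ s ∈ Set.Icc a b, g s = 0 := by
  obtain ⟨s, hs, h⟩ := intermediate_value_Icc hab hg.continuousOn
    (⟨ha, hb⟩ : (0:ℝ) ∈ Icc (g a) (g b))
  exact ⟨s, hs, h⟩

/-- If g has no zero on [a,b] and is positive somewhere there, it is positive everywhere there. -/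
lemma sign_pos_of {g : ℝ → ℝ} (hg : Continuous g) {a b s t : ℝ}
    (hs : s ∈ Icc a b) (ht : t ∈ Icc a b) (hnz : ∀ r ∈ Icc a b, g r ≠ 0)
    (h : 0 < g s) : 0 < g t := by
  by_contra hle
  push_neg at hle
  have ht0 : g t < 0 := lt_of_le_of_ne hle (hnz t ht)
  have hsub : uIcc s t ⊆ Icc a b := Set.uIcc_subset_Icc hs ht
  obtain ⟨r, hr, hr0⟩ := intermediate_value_uIcc (hg.continuousOn (s := uIcc s t))
    (show (0:ℝ) ∈ uIcc (g s) (g t) by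
      rw [Set.mem_uIcc]; right; exact ⟨ht0.le, h.le⟩)
  exact hnz r (hsub hr) hr0

lemma sign_neg_of {g : ℝ → ℝ} (hg : Continuous g) {a b s t : ℝ}
    (hs : s ∈ Icc a b) (ht : t ∈ Icc a b) (hnz : ∀ r ∈ Icc a b, g r ≠ 0)
    (h : g s < 0) : g t < 0 := by
  have := sign_pos_of (g := fun r => - g r) (hg.neg) hs ht
    (fun r hr => by simpa using hnz r hr) (by simpa using h)
  simpa using this

/-- Crossing lemma, version 1: a down point whose second iterate is up, with a point
to its right where the second iterate is down, contradicts `Fix f² = Fix f`. -/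
lemma crossing₁ {f : ℝ → ℝ} (hf : Continuous f)
    (H : ∀ y : ℝ, f (f y) = y → f y = y) {δ ρ : ℝ}
    (h1 : f δ < δ) (h2 : δ < f (f δ)) (h3 : δ < ρ) (h4 : f (f ρ) < ρ) : False := by
  set g : ℝ → ℝ := fun s => f (f s) - s with hgdef
  have hgc : Continuous g := ((hf.comp hf).sub continuous_id)
  have hfc2 : Continuous fun s => f (f s) := hf.comp hf
  -- zeros of g in [δ, ρ]
  obtain ⟨s₀, hs₀, hs₀0⟩ := ivt_down hgc h3.le (by simp [hgdef]; linarith) (by simp [hgdef]; linarith)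
  set Z : Set ℝ := {s | s ∈ Icc δ ρ ∧ f (f s) = s} with hZdef
  have hZc : IsClosed Z := (isClosed_Icc.inter (isClosed_eq hfc2 continuous_id))
  have hZne : Z.Nonempty := ⟨s₀, hs₀, by simpa [hgdef, sub_eq_zero] using hs₀0⟩
  have hZbdd : BddBelow Z := ⟨δ, fun r hr => hr.1.1⟩
  set ξ := sInf Z with hxidef
  have hξZ : ξ ∈ Z := hZc.csInf_mem hZne hZbdd
  have hξfix2 : f (f ξ) = ξ := hξZ.2
  have hξfix : f ξ = ξ := H ξ hξfix2
  have hδξ : δ < ξ := by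
    rcases lt_or_eq_of_le hξZ.1.1 with h | h
    · exact h
    · exfalso; rw [← h] at hξfix; linarith
  -- on [δ, ξ) : f (f s) > s
  have hg2 : ∀ s ∈ Ico δ ξ, s < f (f s) := by
    intro s hsm
    have hnz : ∀ r ∈ Icc δ s, g r ≠ 0 := by
      intro r hr hr0
      have : r ∈ Z := ⟨⟨hr.1, le_trans hr.2 (le_trans hsm.2.le hξZ.1.2)⟩,
        by rw [hgdef] at hr0; simpa [sub_eq_zero] using hr0⟩
      have := csInf_le hZbdd this
      rw [← hxidef] at this
      have : ξ ≤ s := le_trans this hr.2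
      exact absurd hsm.2 (not_lt.mpr this)
    have := sign_pos_of hgc (a := δ) (b := s) ⟨le_refl δ, hsm.1⟩ ⟨hsm.1, le_refl s⟩ hnz
      (by simp [hgdef]; linarith)
    simp [hgdef] at this; linarith
  -- on [δ, ξ) : f s < s
  have hfs : ∀ s ∈ Ico δ ξ, f s < s := by
    intro s hsm
    have hnz : ∀ r ∈ Icc δ s, (fun r => f r - r) r ≠ 0 := by
      intro r hr hr0
      simp only [sub_eq_zero] at hr0
      have hr2 : f (f r) = r := by rw [hr0, hr0]
      have : r < f (f r) := hg2 r ⟨hr.1, lt_of_le_of_lt hr.2 hsm.2⟩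
      rw [hr2] at this; exact lt_irrefl r this
    have := sign_neg_of (g := fun r => f r - r) (hf.sub continuous_id)
      (a := δ) (b := s) ⟨le_refl δ, hsm.1⟩ ⟨hsm.1, le_refl s⟩ hnz (by simp; linarith)
    simp at this; linarith
  -- on [δ, ξ) : f s < δ
  have hfsδ : ∀ s ∈ Ico δ ξ, f s < δ := by
    intro s hsm
    by_contra hge
    push_neg at hge
    have h1' : f s ∈ Ico δ ξ := ⟨hge, lt_trans (hfs s hsm) hsm.2⟩
    have hA := hfs (f s) h1'
    have hB := hg2 s hsm
    have hC := hfs s hsm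
    linarith
  -- limit at ξ
  have hclosed : IsClosed {r : ℝ | f r ≤ δ} := isClosed_le hf continuous_const
  have hsubset : Ico δ ξ ⊆ {r : ℝ | f r ≤ δ} := fun s hs => (hfsδ s hs).le
  have : Icc δ ξ ⊆ {r : ℝ | f r ≤ δ} := by
    rw [← closure_Ico hδξ.ne]
    exact hclosed.closure_subset_iff.mpr hsubset
  have : f ξ ≤ δ := this ⟨hδξ.le, le_refl ξ⟩
  rw [hξfix] at this
  linarith

/-- Crossing lemma, version 2 (mirror): an up point whose second iterate is down, with a point
to its left where the second iterate is up, contradicts `Fix f² = Fix f`. -/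
lemma crossing₂ {f : ℝ → ℝ} (hf : Continuous f)
    (H : ∀ y : ℝ, f (f y) = y → f y = y) {α lam : ℝ}
    (h1 : α < f α) (h2 : f (f α) < α) (h3 : lam < α) (h4 : lam < f (f lam)) : False := by
  set g : ℝ → ℝ := fun s => f (f s) - s with hgdef
  have hgc : Continuous g := ((hf.comp hf).sub continuous_id)
  have hfc2 : Continuous fun s => f (f s) := hf.comp hf
  obtain ⟨s₀, hs₀, hs₀0⟩ := ivt_down hgc h3.le (by simp [hgdef]; linarith) (by simp [hgdef]; linarith)
  set Z : Set ℝ := {s | s ∈ Icc lam α ∧ f (f s) = s} with hZdef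
  have hZc : IsClosed Z := (isClosed_Icc.inter (isClosed_eq hfc2 continuous_id))
  have hZne : Z.Nonempty := ⟨s₀, hs₀, by simpa [hgdef, sub_eq_zero] using hs₀0⟩
  have hZbdd : BddAbove Z := ⟨α, fun r hr => hr.1.2⟩
  set ξ := sSup Z with hxidef
  have hξZ : ξ ∈ Z := hZc.csSup_mem hZne hZbdd
  have hξfix2 : f (f ξ) = ξ := hξZ.2
  have hξfix : f ξ = ξ := H ξ hξfix2
  have hξα : ξ < α := by
    rcases lt_or_eq_of_le hξZ.1.2 with h | h
    · exact h
    · exfalso; rw [h] at hξfix; linarith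
  -- on (ξ, α] : f (f s) < s
  have hg2 : ∀ s ∈ Ioc ξ α, f (f s) < s := by
    intro s hsm
    have hnz : ∀ r ∈ Icc s α, g r ≠ 0 := by
      intro r hr hr0
      have : r ∈ Z := ⟨⟨le_trans (le_trans hξZ.1.1 hsm.1.le) hr.1, hr.2⟩,
        by rw [hgdef] at hr0; simpa [sub_eq_zero] using hr0⟩
      have := le_csSup hZbdd this
      rw [← hxidef] at this
      have : s ≤ ξ := le_trans hr.1 this
      exact absurd hsm.1 (not_lt.mpr this)
    have := sign_neg_of hgc (a := s) (b := α) ⟨hsm.2, le_refl α⟩ ⟨le_refl s, hsm.2⟩ hnz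
      (by simp only [hgdef]; linarith)
    simp only [hgdef] at this; linarith
  -- on (ξ, α] : s < f s
  have hfs : ∀ s ∈ Ioc ξ α, s < f s := by
    intro s hsm
    have hnz : ∀ r ∈ Icc s α, (fun r => f r - r) r ≠ 0 := by
      intro r hr hr0
      simp only [sub_eq_zero] at hr0
      have hr2 : f (f r) = r := by rw [hr0, hr0]
      have : f (f r) < r := hg2 r ⟨lt_of_lt_of_le hsm.1 hr.1, hr.2⟩
      rw [hr2] at this; exact lt_irrefl r this
    have := sign_pos_of (g := fun r => f r - r) (hf.sub continuous_id)
      (a := s) (b := α) ⟨hsm.2, le_refl α⟩ ⟨le_refl s, hsm.2⟩ hnz (by linarith)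
    linarith
  -- on (ξ, α] : α < f s
  have hfsα : ∀ s ∈ Ioc ξ α, α < f s := by
    intro s hsm
    by_contra hge
    push_neg at hge
    have h1' : f s ∈ Ioc ξ α := ⟨lt_trans hsm.1 (hfs s hsm), hge⟩
    have hA := hfs (f s) h1'
    have hB := hg2 s hsm
    have hC := hfs s hsm
    linarith
  have hclosed : IsClosed {r : ℝ | α ≤ f r} := isClosed_le continuous_const hf
  have hsubset : Ioc ξ α ⊆ {r : ℝ | α ≤ f r} := fun s hs => (hfsα s hs).le
  have : Icc ξ α ⊆ {r : ℝ | α ≤ f r} := by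
    rw [← closure_Ioc hξα.ne]
    exact hclosed.closure_subset_iff.mpr hsubset
  have : α ≤ f ξ := this ⟨le_refl ξ, hξα.le⟩
  rw [hξfix] at this
  linarith

lemma iterate_mul_self {g : ℝ → ℝ} {x : ℝ} {m : ℕ} (hx : g^[m] x = x) :
    ∀ q, g^[m*q] x = x := by
  intro q
  induction q with
  | zero => simp
  | succ q ih =>
    have : m * (q+1) = m + m * q := by ring
    rw [this, Function.iterate_add_apply, ih, hx]

lemma periodDvd {g : ℝ → ℝ} {x : ℝ} {m : ℕ} (hm : 0 < m) (hx : g^[m] x = x)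
    (hx' : ∀ i, 0 < i → i < m → g^[i] x ≠ x) : ∀ a, g^[a] x = x → m ∣ a := by
  intro a ha
  have hmod : a % m + m * (a / m) = a := Nat.mod_add_div a m
  have h1 : g^[a % m] x = x := by
    have := iterate_mul_self hx (a / m)
    calc g^[a % m] x = g^[a % m] (g^[m * (a/m)] x) := by rw [this]
    _ = g^[a % m + m * (a/m)] x := (Function.iterate_add_apply g _ _ x).symm
    _ = x := by rw [hmod]; exact ha
  rcases Nat.eq_zero_or_pos (a % m) with h | h
  · exact Nat.dvd_of_mod_eq_zero h
  · exact absurd h1 (hx' _ h (Nat.mod_lt a hm))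

lemma two_lemma {f : ℝ → ℝ} (hf : Continuous f) {x : ℝ} {m : ℕ} (hm : 3 ≤ m)
    (hx : f^[m] x = x) (hx' : ∀ i, 0 < i → i < m → f^[i] x ≠ x) :
    ∃ y, f (f y) = y ∧ f y ≠ y := by
  classical
  by_contra hcon
  push_neg at hcon
  have H : ∀ y : ℝ, f (f y) = y → f y = y := fun y hy => by
    by_contra hne; exact hne (hcon y hy)
  have hm0 : 0 < m := by omega
  set P : Finset ℝ := (Finset.range m).image (fun i => f^[i] x) with hPdef
  have hxP : x ∈ P := by
    rw [hPdef]
    exact Finset.mem_image.mpr ⟨0, Finset.mem_range.mpr hm0, rfl⟩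
  have hPmem : ∀ t ∈ P, ∃ i, i < m ∧ f^[i] x = t := by
    intro t ht
    rw [hPdef] at ht
    obtain ⟨i, hi, hit⟩ := Finset.mem_image.mp ht
    exact ⟨i, Finset.mem_range.mp hi, hit⟩
  have hfP : ∀ t ∈ P, f t ∈ P := by
    intro t ht
    obtain ⟨i, him, rfl⟩ := hPmem t ht
    have h1 : f (f^[i] x) = f^[i+1] x := (Function.iterate_succ_apply' f i x).symm
    rcases lt_or_eq_of_le (Nat.succ_le_of_lt him) with h | h
    · rw [h1, hPdef]; exact Finset.mem_image.mpr ⟨i+1, Finset.mem_range.mpr h, rfl⟩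
    · have h' : i + 1 = m := h
      rw [h1, h', hx]; exact hxP
  have hfix_iter : ∀ j, 0 < j → j < m → ∀ t ∈ P, f^[j] t ≠ t := by
    intro j hj hjm t ht hEq
    obtain ⟨i, him, rfl⟩ := hPmem t ht
    have hxt : x = f^[m - i] (f^[i] x) := by
      rw [← Function.iterate_add_apply, Nat.sub_add_cancel him.le, hx]
    have : f^[j] x = x := by
      calc f^[j] x = f^[j] (f^[m-i] (f^[i] x)) := by rw [← hxt]
      _ = f^[j + (m-i)] (f^[i] x) := (Function.iterate_add_apply f _ _ _).symm
      _ = f^[(m-i) + j] (f^[i] x) := by rw [Nat.add_comm]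
      _ = f^[m-i] (f^[j] (f^[i] x)) := Function.iterate_add_apply f _ _ _
      _ = f^[m-i] (f^[i] x) := by rw [hEq]
      _ = x := hxt.symm
    exact hx' j hj hjm this
  have hne : ∀ t ∈ P, f t ≠ t := by
    intro t ht
    have := hfix_iter 1 (by omega) (by omega) t ht
    simpa using this
  have hne2 : ∀ t ∈ P, f (f t) ≠ t := by
    intro t ht
    have := hfix_iter 2 (by omega) (by omega) t ht
    simpa [Function.iterate_succ_apply'] using this
  have hinj : ∀ s ∈ P, ∀ t ∈ P, f s = f t → s = t := by
    intro s hs t ht hst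
    have key : ∀ r ∈ P, f^[m-1] (f r) = r := by
      intro r hr
      obtain ⟨i, him, rfl⟩ := hPmem r hr
      have h1 : f (f^[i] x) = f^[i+1] x := (Function.iterate_succ_apply' f i x).symm
      rw [h1, ← Function.iterate_add_apply]
      have h2 : m - 1 + (i + 1) = i + m := by omega
      rw [h2, Function.iterate_add_apply, hx]
    rw [← key s hs, ← key t ht, hst]
  have hsurj : ∀ t ∈ P, ∃ s ∈ P, f s = t := by
    intro t ht
    have himg : P.image f = P := by
      apply Finset.eq_of_subset_of_card_le
      · intro r hr
        obtain ⟨s, hs, rfl⟩ := Finset.mem_image.mp hr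
        exact hfP s hs
      · rw [Finset.card_image_of_injOn (fun s hs t ht => hinj s hs t ht)]
    rw [← himg] at ht
    obtain ⟨s, hs, hst⟩ := Finset.mem_image.mp ht
    exact ⟨s, hs, hst⟩
  have hPne : P.Nonempty := ⟨x, hxP⟩
  set M := P.max' hPne with hMdef
  set m₀ := P.min' hPne with hm₀def
  have hMP : M ∈ P := P.max'_mem hPne
  have hm₀P : m₀ ∈ P := P.min'_mem hPne
  have hfM : f M < M :=
    lt_of_le_of_ne (P.le_max' _ (hfP M hMP)) (hne M hMP)
  have hfm₀ : m₀ < f m₀ :=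
    lt_of_le_of_ne (P.min'_le _ (hfP m₀ hm₀P)) (fun h => hne m₀ hm₀P h.symm)
  -- c : the largest orbit point moving up
  set U := P.filter (fun t => t < f t) with hUdef
  have hUne : U.Nonempty := ⟨m₀, Finset.mem_filter.mpr ⟨hm₀P, hfm₀⟩⟩
  set c := U.max' hUne with hcdef
  have hcU : c ∈ U := U.max'_mem hUne
  have hcP : c ∈ P := (Finset.mem_filter.mp hcU).1
  have hcf : c < f c := (Finset.mem_filter.mp hcU).2
  have hdown : ∀ t ∈ P, c < t → f t < t := by
    intro t ht hct
    rcases lt_trichotomy (f t) t with h | h | h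
    · exact h
    · exact absurd h (hne t ht)
    · exact absurd hct (not_lt.mpr (U.le_max' t (Finset.mem_filter.mpr ⟨ht, h⟩)))
  have hcM : c < M := by
    rcases lt_or_eq_of_le (P.le_max' c hcP) with h | h
    · exact h
    · exfalso; rw [h] at hcf; linarith
  -- z : the least fixed point above c
  set Sz : Set ℝ := Ici c ∩ {s | f s = s} with hSzdef
  have hSzc : IsClosed Sz := isClosed_Ici.inter (isClosed_eq hf continuous_id)
  have hSzne : Sz.Nonempty := by
    obtain ⟨z₀, hz₀m, hz₀⟩ := ivt_down (g := fun s => f s - s) (hf.sub continuous_id)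
      hcM.le (by simp; linarith) (by simp; linarith)
    exact ⟨z₀, hz₀m.1, by simpa [sub_eq_zero] using hz₀⟩
  have hSzbdd : BddBelow Sz := ⟨c, fun r hr => hr.1⟩
  set z := sInf Sz with hzdef
  have hzS : z ∈ Sz := hSzc.csInf_mem hSzne hSzbdd
  have hzfix : f z = z := hzS.2
  have hcz : c < z := by
    rcases lt_or_eq_of_le (mem_Ici.mp hzS.1 : c ≤ z) with h | h
    · exact h
    · exfalso; exact hne c hcP (by rw [h]; exact hzfix)
  have hup : ∀ s, c ≤ s → s < z → s < f s := by
    intro s hcs hsz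
    have hnz : ∀ r ∈ Icc c s, (fun r => f r - r) r ≠ 0 := by
      intro r hr hr0
      simp only [sub_eq_zero] at hr0
      have : r ∈ Sz := ⟨hr.1, hr0⟩
      have := csInf_le hSzbdd this
      rw [← hzdef] at this
      linarith [hr.2]
    have := sign_pos_of (g := fun r => f r - r) (hf.sub continuous_id)
      (a := c) (b := s) ⟨le_refl c, hcs⟩ ⟨hcs, le_refl s⟩ hnz (by simp; linarith)
    simp at this; linarith
  have hPcz : ∀ t ∈ P, c < t → z ≤ t := by
    intro t ht hct
    by_contra hlt
    push_neg at hlt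
    have := hup t hct.le hlt
    have := hdown t ht hct
    linarith
  -- there is an orbit point above c that maps to or below c
  have hexists_drop : ∃ t ∈ P, c < t ∧ f t ≤ c := by
    by_contra hcon2
    push_neg at hcon2
    set S := P.filter (fun t => c < t) with hSdef
    have himg : (insert c S).image f ⊆ S := by
      intro r hr
      obtain ⟨t, ht, rfl⟩ := Finset.mem_image.mp hr
      rcases Finset.mem_insert.mp ht with h | h
      · subst h
        exact Finset.mem_filter.mpr ⟨hfP c hcP, hcf⟩
      · have htP := (Finset.mem_filter.mp h).1
        have htc := (Finset.mem_filter.mp h).2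
        exact Finset.mem_filter.mpr ⟨hfP t htP, hcon2 t htP htc⟩
    have hcS : c ∉ S := by
      intro h
      exact lt_irrefl c (Finset.mem_filter.mp h).2
    have hsub : (insert c S : Finset ℝ) ⊆ P := by
      intro r hr
      rcases Finset.mem_insert.mp hr with h | h
      · subst h; exact hcP
      · exact (Finset.mem_filter.mp h).1
    have hcard : ((insert c S).image f).card = S.card + 1 := by
      rw [Finset.card_image_of_injOn (fun s hs t ht => hinj s (hsub hs) t (hsub ht))]
      rw [Finset.card_insert_of_notMem hcS]
    have := Finset.card_le_card himg
    rw [hcard] at this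
    omega
  obtain ⟨t₁, ht₁P, ht₁c, ht₁f⟩ := hexists_drop
  have ht₁z : z < t₁ := by
    rcases lt_or_eq_of_le (hPcz t₁ ht₁P ht₁c) with h | h
    · exact h
    · exfalso; rw [← h] at ht₁f; rw [hzfix] at ht₁f; linarith
  -- u : first point ≥ z whose image drops to or below c
  set Su : Set ℝ := Ici z ∩ {s | f s ≤ c} with hSudef
  have hSuc : IsClosed Su := isClosed_Ici.inter (isClosed_le hf continuous_const)
  have hSune : Su.Nonempty := ⟨t₁, ht₁z.le, ht₁f⟩
  have hSubdd : BddBelow Su := ⟨z, fun r hr => hr.1⟩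
  set u := sInf Su with hudef
  have huS : u ∈ Su := hSuc.csInf_mem hSune hSubdd
  have hzu : z ≤ u := huS.1
  have hufc : f u ≤ c := huS.2
  have huz : z < u := by
    rcases lt_or_eq_of_le hzu with h | h
    · exact h
    · exfalso; rw [← h] at hufc; rw [hzfix] at hufc; linarith
  have hmidc : ∀ s, z ≤ s → s < u → c < f s := by
    intro s hzs hsu
    by_contra hle
    push_neg at hle
    have : s ∈ Su := ⟨hzs, hle⟩
    have := csInf_le hSubdd this
    rw [← hudef] at this
    linarith
  have hcu : c < u := lt_trans hcz huz
  have hfu : f u = c := by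
    refine le_antisymm hufc ?_
    have hclosed : IsClosed {r : ℝ | c ≤ f r} := isClosed_le continuous_const hf
    have hsubset : Ico z u ⊆ {r : ℝ | c ≤ f r} := fun s hs => (hmidc s hs.1 hs.2).le
    have : Icc z u ⊆ {r : ℝ | c ≤ f r} := by
      rw [← closure_Ico huz.ne]
      exact hclosed.closure_subset_iff.mpr hsubset
    exact this ⟨hzu, le_refl u⟩
  -- no orbit points in (z, u), hence none in (c, u)
  have hPzu : ∀ t ∈ P, z < t → u ≤ t := by
    intro t ht hzt
    by_contra hlt
    push_neg at hlt
    set T := P.filter (fun t => z < t ∧ t < u) with hTdef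
    have hTne : T.Nonempty := ⟨t, Finset.mem_filter.mpr ⟨ht, hzt, hlt⟩⟩
    set t₀ := T.min' hTne with ht₀def
    have ht₀T := T.min'_mem hTne
    have ht₀P : t₀ ∈ P := (Finset.mem_filter.mp ht₀T).1
    have ht₀z : z < t₀ := (Finset.mem_filter.mp ht₀T).2.1
    have ht₀u : t₀ < u := (Finset.mem_filter.mp ht₀T).2.2
    have hd : f t₀ < t₀ := hdown t₀ ht₀P (lt_trans hcz ht₀z)
    have hc2 : c < f t₀ := hmidc t₀ ht₀z.le ht₀u
    have hzft : z ≤ f t₀ := hPcz (f t₀) (hfP t₀ ht₀P) hc2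
    have hzft' : z < f t₀ := by
      rcases lt_or_eq_of_le hzft with h | h
      · exact h
      · exfalso; exact hne (f t₀) (hfP t₀ ht₀P) (by rw [← h]; exact hzfix)
    have : f t₀ ∈ T := Finset.mem_filter.mpr ⟨hfP t₀ ht₀P, hzft', lt_trans hd ht₀u⟩
    have := T.min'_le _ this
    rw [← ht₀def] at this
    linarith
  have hPcu : ∀ t ∈ P, c < t → u ≤ t := by
    intro t ht hct
    have h1 := hPcz t ht hct
    rcases lt_or_eq_of_le h1 with h | h
    · exact hPzu t ht h
    · exfalso; exact hne t ht (by rw [← h]; exact hzfix)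
  have hfcu : u < f c := by
    rcases lt_or_eq_of_le (hPcu (f c) (hfP c hcP) hcf) with h | h
    · exact h
    · exfalso
      apply hne2 c hcP
      rw [← h, hfu]
  -- w : the largest fixed point in [z, u]
  set Sw : Set ℝ := Icc z u ∩ {s | f s = s} with hSwdef
  have hSwc : IsClosed Sw := isClosed_Icc.inter (isClosed_eq hf continuous_id)
  have hSwne : Sw.Nonempty := ⟨z, ⟨le_refl z, hzu⟩, hzfix⟩
  have hSwbdd : BddAbove Sw := ⟨u, fun r hr => hr.1.2⟩
  set w := sSup Sw with hwdef
  have hwS : w ∈ Sw := hSwc.csSup_mem hSwne hSwbdd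
  have hzw : z ≤ w := hwS.1.1
  have hwu' : w ≤ u := hwS.1.2
  have hwfix : f w = w := hwS.2
  have hwu : w < u := by
    rcases lt_or_eq_of_le hwu' with h | h
    · exact h
    · exfalso; rw [h] at hwfix; rw [hfu] at hwfix; linarith
  have hcw : c < w := lt_of_lt_of_le hcz hzw
  have hfdown : ∀ s, w < s → s ≤ u → f s < s := by
    intro s hws hsu
    have hnz : ∀ r ∈ Icc s u, (fun r => f r - r) r ≠ 0 := by
      intro r hr hr0
      simp only [sub_eq_zero] at hr0
      have : r ∈ Sw := ⟨⟨le_trans hzw (le_trans hws.le hr.1), hr.2⟩, hr0⟩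
      have := le_csSup hSwbdd this
      rw [← hwdef] at this
      linarith [hr.1]
    have := sign_neg_of (g := fun r => f r - r) (hf.sub continuous_id)
      (a := s) (b := u) ⟨hsu, le_refl u⟩ ⟨le_refl s, hsu⟩ hnz
      (by rw [hfu]; linarith)
    linarith
  have hf2up : ∀ s, w < s → s ≤ u → s < f (f s) := by
    intro s hws hsu
    have hnz : ∀ r ∈ Icc s u, (fun r => f (f r) - r) r ≠ 0 := by
      intro r hr hr0
      simp only [sub_eq_zero] at hr0
      have hfr := H r hr0
      have := hfdown r (lt_of_lt_of_le hws hr.1) hr.2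
      linarith
    have := sign_pos_of (g := fun r => f (f r) - r) ((hf.comp hf).sub continuous_id)
      (a := s) (b := u) ⟨hsu, le_refl u⟩ ⟨le_refl s, hsu⟩ hnz
      (by rw [hfu]; linarith)
    linarith
  -- k : the last preimage of u in [c, w]
  set Sk : Set ℝ := Icc c w ∩ {s | f s = u} with hSkdef
  have hSkc : IsClosed Sk := isClosed_Icc.inter (isClosed_eq hf continuous_const)
  have hSkne : Sk.Nonempty := by
    obtain ⟨s₀, hs₀m, hs₀⟩ := ivt_down (g := fun s => f s - u) (hf.sub continuous_const)
      hcw.le (by simp; linarith) (by simp; rw [hwfix]; linarith)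
    exact ⟨s₀, hs₀m, by simpa [sub_eq_zero] using hs₀⟩
  have hSkbdd : BddAbove Sk := ⟨w, fun r hr => hr.1.2⟩
  set k := sSup Sk with hkdef
  have hkS : k ∈ Sk := hSkc.csSup_mem hSkne hSkbdd
  have hck' : c ≤ k := hkS.1.1
  have hkw' : k ≤ w := hkS.1.2
  have hkf : f k = u := hkS.2
  have hck : c < k := by
    rcases lt_or_eq_of_le hck' with h | h
    · exact h
    · exfalso; rw [← h] at hkf; linarith
  have hkw : k < w := by
    rcases lt_or_eq_of_le hkw' with h | h
    · exact h
    · exfalso; rw [h, hwfix] at hkf; linarith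
  -- k' : the first point in [k, w] mapping to w
  set Sk' : Set ℝ := Icc k w ∩ {s | f s = w} with hSk'def
  have hSk'c : IsClosed Sk' := isClosed_Icc.inter (isClosed_eq hf continuous_const)
  have hSk'ne : Sk'.Nonempty := ⟨w, ⟨hkw.le, le_refl w⟩, hwfix⟩
  have hSk'bdd : BddBelow Sk' := ⟨k, fun r hr => hr.1.1⟩
  set k' := sInf Sk' with hk'def
  have hk'S : k' ∈ Sk' := hSk'c.csInf_mem hSk'ne hSk'bdd
  have hkk'' : k ≤ k' := hk'S.1.1
  have hk'w : k' ≤ w := hk'S.1.2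
  have hk'f : f k' = w := hk'S.2
  have hkk' : k < k' := by
    rcases lt_or_eq_of_le hkk'' with h | h
    · exact h
    · exfalso; rw [← h, hkf] at hk'f; linarith
  have hfgtw : ∀ s, k ≤ s → s < k' → w < f s := by
    intro s hks hsk'
    have hnz : ∀ r ∈ Icc k s, (fun r => f r - w) r ≠ 0 := by
      intro r hr hr0
      simp only [sub_eq_zero] at hr0
      have : r ∈ Sk' := ⟨⟨hr.1, le_trans hr.2 (le_trans hsk'.le hk'w)⟩, hr0⟩
      have := csInf_le hSk'bdd this
      rw [← hk'def] at this
      linarith [hr.2]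
    have := sign_pos_of (g := fun r => f r - w) (hf.sub continuous_const)
      (a := k) (b := s) ⟨le_refl k, hks⟩ ⟨hks, le_refl s⟩ hnz
      (by rw [hkf]; linarith)
    linarith
  -- the IVT point for f² on [k, k'] must be the fixed point w, so k' = w
  have hk'weq : k' = w := by
    obtain ⟨y, hym, hy⟩ := ivt_up (g := fun s => f (f s) - s) ((hf.comp hf).sub continuous_id)
      hkk'.le (by rw [hkf, hfu]; linarith)
      (by rw [hk'f, hwfix]; linarith [hk'w])
    simp only [sub_eq_zero] at hy
    have hyfix : f y = y := H y hy
    rcases lt_or_eq_of_le hym.2 with h | h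
    · exfalso
      have h2 := hfgtw y hym.1 h
      have hyw : y ≤ w := le_trans hym.2 hk'w
      rw [hyfix] at h2
      linarith
    · have h1 : f k' = k' := by rw [← h]; exact hyfix
      rw [hk'f] at h1
      exact h1.symm
  have hfgtw' : ∀ s, k ≤ s → s < w → w < f s := by
    intro s h1 h2
    exact hfgtw s h1 (by rw [hk'weq]; exact h2)
  -- f² < id on [k, w)
  have hf2dn : ∀ s, k ≤ s → s < w → f (f s) < s := by
    intro s hks hsw
    have hnz : ∀ r ∈ Icc k s, (fun r => f (f r) - r) r ≠ 0 := by
      intro r hr hr0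
      simp only [sub_eq_zero] at hr0
      have hfr := H r hr0
      have := hfgtw' r hr.1 (lt_of_le_of_lt hr.2 hsw)
      rw [hfr] at this
      have : r ≤ s := hr.2
      linarith
    have := sign_neg_of (g := fun r => f (f r) - r) ((hf.comp hf).sub continuous_id)
      (a := k) (b := s) ⟨le_refl k, hks⟩ ⟨hks, le_refl s⟩ hnz
      (by rw [hkf, hfu]; linarith)
    linarith
  -- f > w on all of (c, w)
  have hgt20 : ∀ r, c < r → r < w → w < f r := by
    intro r hcr hrw
    obtain ⟨t, htm, htf⟩ := ivt_down (g := fun s => f s - r) (hf.sub continuous_const)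
      hwu.le (by rw [hwfix]; linarith) (by rw [hfu]; linarith)
    simp only [sub_eq_zero] at htf
    have htw : w < t := by
      rcases lt_or_eq_of_le htm.1 with h | h
      · exact h
      · exfalso; rw [← h, hwfix] at htf; linarith
    have := hf2up t htw htm.2
    rw [htf] at this
    linarith
  -- f² < id on (c, w)
  have h21 : ∀ s, c < s → s < w → f (f s) < s := by
    intro s hcs hsw
    rcases le_or_gt k s with h | h
    · exact hf2dn s h hsw
    · have hnz : ∀ r ∈ Icc s k, (fun r => f (f r) - r) r ≠ 0 := by
        intro r hr hr0
        simp only [sub_eq_zero] at hr0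
        have hfr := H r hr0
        have := hgt20 r (lt_of_lt_of_le hcs hr.1) (lt_of_le_of_lt hr.2 hkw)
        rw [hfr] at this
        linarith [hr.2, hkw]
      have := sign_neg_of (g := fun r => f (f r) - r) ((hf.comp hf).sub continuous_id)
        (a := s) (b := k) ⟨h.le, le_refl k⟩ ⟨le_refl s, h.le⟩ hnz
        (by rw [hkf, hfu]; linarith)
      linarith
  -- f (f c) < c
  have hf2c : f (f c) < c := by
    have hle : f (f c) ≤ c := by
      have hclosed : IsClosed {r : ℝ | f (f r) - r ≤ 0} :=
        isClosed_le ((hf.comp hf).sub continuous_id) continuous_const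
      have hsubset : Ioo c w ⊆ {r : ℝ | f (f r) - r ≤ 0} := by
        intro s hs
        have := h21 s hs.1 hs.2
        simp only [mem_setOf_eq]
        linarith
      have : Icc c w ⊆ {r : ℝ | f (f r) - r ≤ 0} := by
        rw [← closure_Ioo hcw.ne]
        exact hclosed.closure_subset_iff.mpr hsubset
      have := this ⟨le_refl c, hcw.le⟩
      simp only [mem_setOf_eq] at this
      linarith
    rcases lt_or_eq_of_le hle with h | h
    · exact h
    · exact absurd h (hne2 c hcP)
  -- endgame
  rcases lt_or_eq_of_le (P.min'_le c hcP) with hm₀c | hm₀c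
  · -- Case A: minimum of orbit is strictly below c
    refine crossing₂ hf H (α := c) (lam := m₀) hcf hf2c hm₀c ?_
    have h1 : f (f m₀) ∈ P := hfP _ (hfP _ hm₀P)
    have h2 := P.min'_le _ h1
    rw [← hm₀def] at h2
    rcases lt_or_eq_of_le h2 with h | h
    · exact h
    · exact absurd h.symm (hne2 m₀ hm₀P)
  · -- Case B: c is the minimum of the orbit
    have hallc : ∀ t ∈ P, c ≤ t := by
      intro t ht
      have h1 : m₀ ≤ t := P.min'_le t ht
      have h2 : m₀ = c := hm₀c
      linarith
    have hfcM : f c = M := by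
      obtain ⟨s, hsP, hsf⟩ := hsurj M hMP
      rcases lt_or_eq_of_le (hallc s hsP) with h | h
      · exfalso
        have := hdown s hsP h
        rw [hsf] at this
        exact absurd (P.le_max' s hsP) (not_le.mpr this)
      · rw [h]; exact hsf
    obtain ⟨p₂, hp₂P, hp₂f⟩ := hsurj c hcP
    have hp₂c : c < p₂ := by
      rcases lt_or_eq_of_le (hallc p₂ hp₂P) with h | h
      · exact h
      · exfalso; rw [← h] at hp₂f; exact hne c hcP hp₂f
    have hp₂M : p₂ < M := by
      rcases lt_or_eq_of_le (P.le_max' p₂ hp₂P) with h | h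
      · exact h
      · exfalso
        apply hne2 c hcP
        have h2 : M = p₂ := h.symm
        rw [hfcM, h2, hp₂f]
    refine crossing₁ hf H (δ := p₂) (ρ := M) (by rw [hp₂f]; exact hp₂c) ?_ hp₂M ?_
    · rw [hp₂f, hfcM]; exact hp₂M
    · have h1 : f (f M) ∈ P := hfP _ (hfP _ hMP)
      rcases lt_or_eq_of_le (P.le_max' _ h1) with h | h
      · exact h
      · exact absurd h (hne2 M hMP)

lemma exists_fixed {f : ℝ → ℝ} (hf : Continuous f) {x : ℝ} {m : ℕ} (hm : 0 < m)
    (hx : f^[m] x = x) : ∃ y, f y = y := by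
  classical
  set P : Finset ℝ := (Finset.range m).image (fun i => f^[i] x) with hPdef
  have hxP : x ∈ P := Finset.mem_image.mpr ⟨0, Finset.mem_range.mpr hm, rfl⟩
  have hPne : P.Nonempty := ⟨x, hxP⟩
  have hfP : ∀ t ∈ P, f t ∈ P := by
    intro t ht
    obtain ⟨i, hi, rfl⟩ := Finset.mem_image.mp ht
    rw [Finset.mem_range] at hi
    have h1 : f (f^[i] x) = f^[i+1] x := (Function.iterate_succ_apply' f i x).symm
    rcases lt_or_eq_of_le (Nat.succ_le_of_lt hi) with h | h
    · rw [h1]; exact Finset.mem_image.mpr ⟨i+1, Finset.mem_range.mpr h, rfl⟩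
    · have h' : i + 1 = m := h
      rw [h1, h', hx]; exact hxP
  set a := P.min' hPne
  set b := P.max' hPne
  have hab : a ≤ b := P.min'_le b (P.max'_mem hPne)
  obtain ⟨y, _, hy⟩ := ivt_down (g := fun s => f s - s) (hf.sub continuous_id) hab
    (by simp; linarith [P.min'_le (f a) (hfP a (P.min'_mem hPne))])
    (by simp; linarith [P.le_max' (f b) (hfP b (P.max'_mem hPne))])
  exact ⟨y, by simpa [sub_eq_zero] using hy⟩

/-- Main induction: if `g` has a point of least period `m`, where `m` is not a power of 2,
then `g` has a point of least period `2^k`, for every `k`. -/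
theorem key_induction : ∀ (k : ℕ) (g : ℝ → ℝ), Continuous g → ∀ (m : ℕ), 0 < m →
    (¬ ∃ j : ℕ, m = 2 ^ j) → ∀ x : ℝ, g^[m] x = x → (∀ i, 0 < i → i < m → g^[i] x ≠ x) →
    ∃ y, g^[2 ^ k] y = y ∧ ∀ j, 0 < j → j < 2 ^ k → g^[j] y ≠ y := by
  intro k
  induction k with
  | zero =>
    intro g hg m hm hnp x hx hx'
    obtain ⟨y, hy⟩ := exists_fixed hg hm hx
    exact ⟨y, by simpa using hy, by intro j hj hj2; omega⟩
  | succ k ih =>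
    intro g hg m hm hnp x hx hx'
    have hm3 : 3 ≤ m := by
      rcases m with _ | _ | _ | m
      · omega
      · exact absurd ⟨0, rfl⟩ hnp
      · exact absurd ⟨1, rfl⟩ hnp
      · omega
    rcases Nat.eq_zero_or_pos k with hk0 | hkpos
    · -- k = 0 : period 2 via the two-cycle lemma
      subst hk0
      obtain ⟨y, hy1, hy2⟩ := two_lemma hg hm3 hx hx'
      refine ⟨y, ?_, ?_⟩
      · simpa [Function.iterate_succ_apply'] using hy1
      · intro j hj hj2
        have : j = 1 := by omega
        subst this
        simpa using hy2
    · -- k ≥ 1 : doubling step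
      set h : ℝ → ℝ := g^[2] with hhdef
      have hhc : Continuous h := hg.iterate 2
      have hcomp : ∀ (a : ℕ) (y : ℝ), h^[a] y = g^[2*a] y := by
        intro a y
        rw [hhdef, Function.iterate_mul]
      have hdvd := periodDvd (by omega : 0 < m) hx hx'
      -- x has h-least period m' where m' is m (m odd) or m/2 (m even), not a power of 2
      obtain ⟨m', hm'pos, hm'np, hxh, hxh'⟩ :
          ∃ m', 0 < m' ∧ (¬ ∃ j : ℕ, m' = 2 ^ j) ∧ h^[m'] x = x ∧
            (∀ i, 0 < i → i < m' → h^[i] x ≠ x) := by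
        rcases Nat.even_or_odd m with he | ho
        · obtain ⟨m', rfl⟩ := he
          refine ⟨m', by omega, ?_, ?_, ?_⟩
          · rintro ⟨j, rfl⟩
            exact hnp ⟨j+1, by ring⟩
          · rw [hcomp, show 2 * m' = m' + m' by ring]
            exact hx
          · intro i hi him hih
            rw [hcomp] at hih
            have hd := hdvd _ hih
            obtain ⟨q, hq⟩ := hd
            have hq' : 2 * i = 2 * (m' * q) := by rw [hq]; ring
            have : m' ∣ i := ⟨q, by omega⟩
            have := Nat.le_of_dvd hi this
            omega
        · refine ⟨m, by omega, hnp, ?_, ?_⟩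
          · rw [hcomp]
            have h2 : 2 * m = m + m := by ring
            rw [h2, Function.iterate_add_apply, hx, hx]
          · intro i hi him hih
            rw [hcomp] at hih
            have h1 : m ∣ 2 * i := hdvd _ hih
            have h2 : m ∣ i := (Nat.coprime_two_left.mpr ho).symm.dvd_of_dvd_mul_left h1
            have := Nat.le_of_dvd hi h2
            omega
      obtain ⟨y, hy1, hy2⟩ := ih h hhc m' hm'pos hm'np x hxh hxh'
      have hydvd := periodDvd (pow_pos (by omega : (0:ℕ) < 2) k) hy1 hy2
      refine ⟨y, ?_, ?_⟩
      · rw [show (2:ℕ)^(k+1) = 2 * 2^k by ring, ← hcomp]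
        exact hy1
      · intro j hj hj2 hjy
        have hhj : h^[j] y = y := by
          rw [hcomp, show 2*j = j + j by ring, Function.iterate_add_apply, hjy, hjy]
        have h1 : 2^k ∣ j := hydvd j hhj
        have h2 : j = 2^k := by
          obtain ⟨q, hq⟩ := h1
          have hpos : 0 < 2^k := pow_pos (by omega) k
          have hq1 : 1 ≤ q := by
            rcases Nat.eq_zero_or_pos q with h | h
            · exfalso; rw [h, Nat.mul_zero] at hq; omega
            · exact h
          have hq2 : q < 2 := by
            by_contra hge
            push_neg at hge
            have h3 : 2^k * 2 ≤ 2^k * q := Nat.mul_le_mul_left _ hge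
            rw [← pow_succ] at h3
            omega
          have : q = 1 := by omega
          rw [this, Nat.mul_one] at hq
          exact hq
        subst h2
        -- then h^[2^(k-1)] y = g^[2^k] y = y contradicts least h-period 2^k
        obtain ⟨k', rfl⟩ : ∃ k', k = k' + 1 := ⟨k - 1, by omega⟩
        have : h^[2^k'] y = y := by
          rw [hcomp, show 2 * 2^k' = 2^(k'+1) from (pow_succ' 2 k').symm]
          exact hjy
        exact hy2 (2^k') (pow_pos (by omega) k')
          (by
            rw [pow_succ]
            have := pow_pos (show (0:ℕ) < 2 by omega) k'
            omega) this

theorem non_power_of_two_forces_all_powers_of_two (f : ℝ → ℝ) (hf : Continuous f)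
    (n : ℕ) (hn : 0 < n) (hnp2 : ¬ ∃ j : ℕ, n = 2 ^ j)
    (x : ℝ) (hx : f^[n] x = x) (hx' : ∀ k : ℕ, 0 < k → k < n → f^[k] x ≠ x) :
    ∀ k : ℕ, ∃ y : ℝ, f^[2 ^ k] y = y ∧
      ∀ j : ℕ, 0 < j → j < 2 ^ k → f^[j] y ≠ y := by
  intro k
  exact key_induction k f hf n hn hnp2 x hx hx'
end

section
/- Let f : ℝ → ℝ be continuous with a periodic point of least period n = 2^k · r, where r > 1 is odd and k ≥ 0. Then for every integer s > r, f has a periodic point of least period 2^k · s. -/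
open Set Function

private lemma onto_key {f : ℝ → ℝ} (hf : Continuous f) {u v c d : ℝ} (huv : u ≤ v)
    (hcd : c ≤ d) (hu : f u = c) (hv : f v = d) :
    ∃ a' b', a' ≤ b' ∧ Icc a' b' ⊆ Icc u v ∧ f '' Icc a' b' = Icc c d := by
  set S : Set ℝ := Icc u v ∩ f ⁻¹' {c} with hS
  have hScomp : IsCompact S := isCompact_Icc.inter_right (isClosed_singleton.preimage hf)
  have hSne : S.Nonempty := ⟨u, ⟨le_refl u, huv⟩, hu⟩
  have hSbdd : BddAbove S := hScomp.bddAbove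
  set u' := sSup S with hu'
  have hu'S : u' ∈ S := hScomp.sSup_mem hSne
  have hu'c : f u' = c := hu'S.2
  have hu'v : u' ≤ v := hu'S.1.2
  set T : Set ℝ := Icc u' v ∩ f ⁻¹' {d} with hT
  have hTcomp : IsCompact T := isCompact_Icc.inter_right (isClosed_singleton.preimage hf)
  have hTne : T.Nonempty := ⟨v, ⟨hu'v, le_refl v⟩, hv⟩
  have hTbdd : BddBelow T := hTcomp.bddBelow
  set v' := sInf T with hv'
  have hv'T : v' ∈ T := hTcomp.sInf_mem hTne
  have hv'd : f v' = d := hv'T.2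
  have huv' : u' ≤ v' := hv'T.1.1
  have hv'v : v' ≤ v := hv'T.1.2
  refine ⟨u', v', huv', fun t ht => ⟨hu'S.1.1.trans ht.1, ht.2.trans hv'v⟩, ?_⟩
  apply Subset.antisymm
  · rintro z ⟨t, ht, rfl⟩
    constructor
    · by_contra hlt
      push_neg at hlt
      obtain ⟨w, hw, hwc⟩ := intermediate_value_Icc ht.2 hf.continuousOn
        (show c ∈ Icc (f t) (f v') from ⟨hlt.le, hv'd ▸ hcd⟩)
      have hwS : w ∈ S := ⟨⟨hu'S.1.1.trans (ht.1.trans hw.1), hw.2.trans hv'v⟩, hwc⟩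
      have hwu' : w ≤ u' := le_csSup hSbdd hwS
      have hwt : w = t := le_antisymm (hwu'.trans ht.1) hw.1
      rw [hwt] at hwc; linarith
    · by_contra hlt
      push_neg at hlt
      obtain ⟨w, hw, hwd⟩ := intermediate_value_Icc ht.1 hf.continuousOn
        (show d ∈ Icc (f u') (f t) from ⟨hu'c ▸ hcd, hlt.le⟩)
      have hwT : w ∈ T := ⟨⟨hw.1, (hw.2.trans ht.2).trans hv'v⟩, hwd⟩
      have hv'w : v' ≤ w := csInf_le hTbdd hwT
      have : w = t := le_antisymm hw.2 (ht.2.trans hv'w)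
      rw [this] at hwd; linarith
  · rw [← hu'c, ← hv'd]
    exact fun z hz => intermediate_value_Icc huv' hf.continuousOn hz

lemma onto_subinterval {f : ℝ → ℝ} (hf : Continuous f) {a b c d : ℝ} (hab : a ≤ b)
    (hcd : c ≤ d) (h : Icc c d ⊆ f '' Icc a b) :
    ∃ a' b', a' ≤ b' ∧ Icc a' b' ⊆ Icc a b ∧ f '' Icc a' b' = Icc c d := by
  obtain ⟨u, hu, hfu⟩ := h (left_mem_Icc.2 hcd)
  obtain ⟨v, hv, hfv⟩ := h (right_mem_Icc.2 hcd)
  rcases le_total u v with huv | hvu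
  · obtain ⟨a', b', h1, h2, h3⟩ := onto_key hf huv hcd hfu hfv
    exact ⟨a', b', h1, h2.trans (Icc_subset_Icc hu.1 hv.2), h3⟩
  · -- reflect: use g t = f (-t)
    have hg : Continuous (fun t => f (-t)) := hf.comp continuous_neg
    obtain ⟨a', b', h1, h2, h3⟩ := onto_key hg (neg_le_neg hvu)
      hcd (by simpa using hfu) (by simpa using hfv)
    refine ⟨-b', -a', neg_le_neg h1, ?_, ?_⟩
    · intro t ht
      have : -t ∈ Icc a' b' := ⟨by linarith [ht.1, ht.2], by linarith [ht.1, ht.2]⟩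
      have h4 := h2 this
      have h5 : -u ≤ -t := h4.1
      have h6 : -t ≤ -v := h4.2
      exact ⟨by linarith [hv.1], by linarith [hu.2]⟩
    · rw [← h3]
      ext z
      simp only [mem_image]
      constructor
      · rintro ⟨t, ht, rfl⟩
        exact ⟨-t, ⟨by linarith [ht.1, ht.2], by linarith [ht.1, ht.2]⟩, by simp⟩
      · rintro ⟨t, ht, rfl⟩
        exact ⟨-t, ⟨by linarith [ht.1, ht.2], by linarith [ht.1, ht.2]⟩, rfl⟩

lemma fixed_of_self_cover {g : ℝ → ℝ} (hg : Continuous g) {u v : ℝ} (huv : u ≤ v)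
    (h : Icc u v ⊆ g '' Icc u v) : ∃ z ∈ Icc u v, g z = z := by
  obtain ⟨a, ha, hga⟩ := h (left_mem_Icc.2 huv)
  obtain ⟨b, hb, hgb⟩ := h (right_mem_Icc.2 huv)
  have hca : ContinuousOn (fun t => g t - t) (uIcc a b) :=
    (hg.sub continuous_id).continuousOn
  have h0 : (0:ℝ) ∈ uIcc (g a - a) (g b - b) := by
    rw [mem_uIcc]
    have h1 : g a - a ≤ 0 := by rw [hga]; linarith [ha.1]
    have h2 : 0 ≤ g b - b := by rw [hgb]; linarith [hb.2]
    left; exact ⟨h1, h2⟩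
  obtain ⟨z, hz, hz0⟩ := intermediate_value_uIcc hca h0
  have hzuv : z ∈ Icc u v := by
    have : uIcc a b ⊆ Icc u v := uIcc_subset_Icc ha hb
    exact this hz
  exact ⟨z, hzuv, by dsimp at hz0; linarith⟩

lemma follow_loop {f : ℝ → ℝ} (hf : Continuous f) (A : ℕ → Set ℝ) (n : ℕ) (hn : 0 < n)
    (hI : ∀ j, j ≤ n → ∃ u v, u ≤ v ∧ A j = Icc u v)
    (hAn : A n = A 0)
    (hcov : ∀ j, j < n → A (j+1) ⊆ f '' A j) :
    ∃ y, f^[n] y = y ∧ ∀ j, j < n → f^[j] y ∈ A j := by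
  have key : ∀ j, j ≤ n → ∃ u v, u ≤ v ∧ f^[j] '' Icc u v = A j ∧
      ∀ i, i ≤ j → ∀ y ∈ Icc u v, f^[i] y ∈ A i := by
    intro j
    induction j with
    | zero =>
      intro _
      obtain ⟨u, v, huv, hA0⟩ := hI 0 (Nat.zero_le n)
      exact ⟨u, v, huv, by simpa using hA0.symm,
        fun i hi y hy => by simp at hi; subst hi; simpa using hA0 ▸ hy⟩
    | succ j ih =>
      intro hjn
      obtain ⟨u, v, huv, himg, htrack⟩ := ih (Nat.le_of_succ_le hjn)
      have hj : j < n := hjn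
      have hsub : A (j+1) ⊆ f^[j+1] '' Icc u v := by
        calc A (j+1) ⊆ f '' A j := hcov j hj
          _ = f '' (f^[j] '' Icc u v) := by rw [himg]
          _ = f^[j+1] '' Icc u v := by
              rw [image_image]
              ext z; simp [iterate_succ_apply']
      obtain ⟨c, d, hcd, hA1⟩ := hI (j+1) hjn
      obtain ⟨u', v', h1, h2, h3⟩ := onto_subinterval (hf.iterate (j+1)) huv hcd
        (hA1 ▸ hsub)
      refine ⟨u', v', h1, by rw [h3, hA1], fun i hi y hy => ?_⟩
      rcases Nat.lt_or_ge i (j+1) with hlt | hge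
      · exact htrack i (Nat.lt_succ_iff.mp hlt) y (h2 hy)
      · have : i = j+1 := le_antisymm hi hge
        subst this
        rw [hA1, ← h3]
        exact mem_image_of_mem _ hy
  obtain ⟨u, v, huv, himg, htrack⟩ := key n le_rfl
  have hsub : Icc u v ⊆ f^[n] '' Icc u v := by
    rw [himg, hAn]
    intro y hy
    simpa using htrack 0 (Nat.zero_le n) y hy
  obtain ⟨z, hz, hzfix⟩ := fixed_of_self_cover (hf.iterate n) huv hsub
  exact ⟨z, hzfix, fun j hj => htrack j hj.le z hz⟩

/-- `(a,b)` is a gap of the finite set `P`: consecutive points of `P`. -/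
def IsGap (P : Finset ℝ) (a b : ℝ) : Prop :=
  a ∈ P ∧ b ∈ P ∧ a < b ∧ ∀ c ∈ P, c ≤ a ∨ b ≤ c

lemma gap_right_unique {P : Finset ℝ} {a b b' : ℝ} (h : IsGap P a b) (h' : IsGap P a b') :
    b = b' := by
  rcases h with ⟨_, hb, hab, hg⟩
  rcases h' with ⟨_, hb', hab', hg'⟩
  rcases hg b' hb' with h1 | h1
  · rcases hg' b hb with h2 | h2
    · linarith
    · linarith
  · rcases hg' b hb with h2 | h2
    · linarith
    · linarith

lemma gap_inter {P : Finset ℝ} {a b c d z : ℝ} (h1 : IsGap P a b) (h2 : IsGap P c d)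
    (hne : (a, b) ≠ (c, d)) (hz1 : z ∈ Icc a b) (hz2 : z ∈ Icc c d) : z ∈ P := by
  rcases lt_trichotomy a c with hac | hac | hac
  · rcases h1.2.2.2 c h2.1 with h | h
    · linarith
    · -- b ≤ c, so z = b = c
      have : z = c := le_antisymm (by linarith [hz1.2]) hz2.1
      rw [this]; exact h2.1
  · exact absurd (Prod.ext hac (gap_right_unique (hac ▸ h1) h2)) hne
  · rcases h2.2.2.2 a h1.1 with h | h
    · linarith
    · have : z = a := le_antisymm (by linarith [hz2.2]) hz1.1
      rw [this]; exact h1.1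
  
lemma gap_next {P : Finset ℝ} {a w : ℝ} (ha : a ∈ P) (hw : w ∈ P) (haw : a < w) :
    ∃ b, IsGap P a b := by
  classical
  set s := P.filter (fun z => a < z) with hs
  have hsne : s.Nonempty := ⟨w, Finset.mem_filter.2 ⟨hw, haw⟩⟩
  refine ⟨s.min' hsne, ha, (Finset.mem_filter.1 (s.min'_mem hsne)).1,
    (Finset.mem_filter.1 (s.min'_mem hsne)).2, fun c hc => ?_⟩
  rcases le_or_gt c a with h | h
  · exact Or.inl h
  · exact Or.inr (s.min'_le c (Finset.mem_filter.2 ⟨hc, h⟩))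

lemma gap_prev {P : Finset ℝ} {b w : ℝ} (hb : b ∈ P) (hw : w ∈ P) (hwb : w < b) :
    ∃ a, IsGap P a b := by
  classical
  set s := P.filter (fun z => z < b) with hs
  have hsne : s.Nonempty := ⟨w, Finset.mem_filter.2 ⟨hw, hwb⟩⟩
  refine ⟨s.max' hsne, (Finset.mem_filter.1 (s.max'_mem hsne)).1, hb,
    (Finset.mem_filter.1 (s.max'_mem hsne)).2, fun c hc => ?_⟩
  rcases lt_or_ge c b with h | h
  · exact Or.inl (s.le_max' c (Finset.mem_filter.2 ⟨hc, h⟩))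
  · exact Or.inr h

/-- Covering relation between interval-pairs via endpoint images. -/
def Cov (f : ℝ → ℝ) (G H : ℝ × ℝ) : Prop :=
  (f G.1 ≤ H.1 ∧ H.2 ≤ f G.2) ∨ (f G.2 ≤ H.1 ∧ H.2 ≤ f G.1)

lemma Cov.subset {f : ℝ → ℝ} (hf : Continuous f) {G H : ℝ × ℝ} (h : Cov f G H)
    (hG : G.1 ≤ G.2) : Icc H.1 H.2 ⊆ f '' Icc G.1 G.2 := by
  rcases h with ⟨h1, h2⟩ | ⟨h1, h2⟩
  · exact fun z hz => intermediate_value_Icc hG hf.continuousOn ⟨h1.trans hz.1, hz.2.trans h2⟩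
  · exact fun z hz => intermediate_value_Icc' hG hf.continuousOn ⟨h1.trans hz.1, hz.2.trans h2⟩

/-- Low point left of high point: some gap in between covers `(c,d)`. -/
lemma cover_lowhigh_lr {P : Finset ℝ} {f : ℝ → ℝ}
    (hfP : ∀ z ∈ P, f z ∈ P) {c d : ℝ} (hcd : IsGap P c d) :
    ∀ n : ℕ, ∀ a b : ℝ, a ∈ P → b ∈ P → a < b →
    (P.filter (fun z => a ≤ z ∧ z ≤ b)).card ≤ n →
    f a ≤ c → d ≤ f b →
    ∃ e1 e2, IsGap P e1 e2 ∧ a ≤ e1 ∧ e2 ≤ b ∧ Cov f (e1, e2) (c, d) := by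
  classical
  intro n
  induction n with
  | zero =>
    intro a b ha hb hlt hcard hla hhb
    exfalso
    have h1 : a ∈ P.filter (fun z => a ≤ z ∧ z ≤ b) :=
      Finset.mem_filter.2 ⟨ha, le_refl a, hlt.le⟩
    have := Finset.card_pos.2 ⟨a, h1⟩
    omega
  | succ n ih =>
    intro a b ha hb hlt hcard hla hhb
    obtain ⟨a', hgap⟩ := gap_next ha hb hlt
    have haa' : a < a' := hgap.2.2.1
    have ha'b : a' ≤ b := by
      rcases hgap.2.2.2 b hb with h | h
      · linarith
      · exact h
    rcases le_or_gt d (f a') with hhigh | hlow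
    · exact ⟨a, a', hgap, le_refl a, ha'b, Or.inl ⟨hla, hhigh⟩⟩
    · have hfa' : f a' ≤ c := by
        rcases hcd.2.2.2 (f a') (hfP a' hgap.2.1) with h | h
        · exact h
        · linarith
      have ha'b' : a' < b := by
        rcases lt_or_eq_of_le ha'b with h | h
        · exact h
        · exfalso; rw [h] at hfa'; linarith [hcd.2.2.1]
      have hsub : P.filter (fun z => a' ≤ z ∧ z ≤ b) ⊆
          (P.filter (fun z => a ≤ z ∧ z ≤ b)).erase a := by
        intro z hz
        rw [Finset.mem_filter] at hz
        rw [Finset.mem_erase, Finset.mem_filter]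
        refine ⟨fun h => by rw [h] at hz; linarith [hz.2.1], hz.1, by linarith [hz.2.1], hz.2.2⟩
      have hcard' : (P.filter (fun z => a' ≤ z ∧ z ≤ b)).card ≤ n := by
        have h1 := Finset.card_le_card hsub
        have h2 : a ∈ P.filter (fun z => a ≤ z ∧ z ≤ b) :=
          Finset.mem_filter.2 ⟨ha, le_refl a, hlt.le⟩
        have h3 := Finset.card_erase_of_mem h2
        omega
      obtain ⟨e1, e2, h1, h2, h3, h4⟩ := ih a' b hgap.2.1 hb ha'b' hcard' hfa' hhb
      exact ⟨e1, e2, h1, by linarith, h3, h4⟩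

/-- Low point right of high point: some gap in between covers `(c,d)`. -/
lemma cover_lowhigh_rl {P : Finset ℝ} {f : ℝ → ℝ}
    (hfP : ∀ z ∈ P, f z ∈ P) {c d : ℝ} (hcd : IsGap P c d) :
    ∀ n : ℕ, ∀ a b : ℝ, a ∈ P → b ∈ P → b < a →
    (P.filter (fun z => b ≤ z ∧ z ≤ a)).card ≤ n →
    f a ≤ c → d ≤ f b →
    ∃ e1 e2, IsGap P e1 e2 ∧ b ≤ e1 ∧ e2 ≤ a ∧ Cov f (e1, e2) (c, d) := by
  classical
  intro n
  induction n with
  | zero =>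
    intro a b ha hb hlt hcard hla hhb
    exfalso
    have h1 : a ∈ P.filter (fun z => b ≤ z ∧ z ≤ a) :=
      Finset.mem_filter.2 ⟨ha, hlt.le, le_refl a⟩
    have := Finset.card_pos.2 ⟨a, h1⟩
    omega
  | succ n ih =>
    intro a b ha hb hlt hcard hla hhb
    obtain ⟨a', hgap⟩ := gap_prev ha hb hlt
    have haa' : a' < a := hgap.2.2.1
    have ha'b : b ≤ a' := by
      rcases hgap.2.2.2 b hb with h | h
      · exact h
      · linarith
    rcases le_or_gt d (f a') with hhigh | hlow
    · exact ⟨a', a, hgap, ha'b, le_refl a, Or.inr ⟨hla, hhigh⟩⟩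
    · have hfa' : f a' ≤ c := by
        rcases hcd.2.2.2 (f a') (hfP a' hgap.1) with h | h
        · exact h
        · linarith
      have ha'b' : b < a' := by
        rcases lt_or_eq_of_le ha'b with h | h
        · exact h
        · exfalso; rw [← h] at hfa'; linarith [hcd.2.2.1]
      have hsub : P.filter (fun z => b ≤ z ∧ z ≤ a') ⊆
          (P.filter (fun z => b ≤ z ∧ z ≤ a)).erase a := by
        intro z hz
        rw [Finset.mem_filter] at hz
        rw [Finset.mem_erase, Finset.mem_filter]
        refine ⟨fun h => by rw [h] at hz; linarith [hz.2.2], hz.1, hz.2.1, by linarith [hz.2.2]⟩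
      have hcard' : (P.filter (fun z => b ≤ z ∧ z ≤ a')).card ≤ n := by
        have h1 := Finset.card_le_card hsub
        have h2 : a ∈ P.filter (fun z => b ≤ z ∧ z ≤ a) :=
          Finset.mem_filter.2 ⟨ha, hlt.le, le_refl a⟩
        have h3 := Finset.card_erase_of_mem h2
        omega
      obtain ⟨e1, e2, h1, h2, h3, h4⟩ := ih a' b hgap.1 hb ha'b' hcard' hfa' hhb
      exact ⟨e1, e2, h1, h2, by linarith, h4⟩

/-- Combined version. -/
lemma cover_of_lowhigh {P : Finset ℝ} {f : ℝ → ℝ}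
    (hfP : ∀ z ∈ P, f z ∈ P) {c d : ℝ} (hcd : IsGap P c d)
    {a b lo hi : ℝ} (ha : a ∈ P) (hb : b ∈ P) (hla : f a ≤ c) (hhb : d ≤ f b)
    (haL : lo ≤ a) (haH : a ≤ hi) (hbL : lo ≤ b) (hbH : b ≤ hi) :
    ∃ e1 e2, IsGap P e1 e2 ∧ lo ≤ e1 ∧ e2 ≤ hi ∧ Cov f (e1, e2) (c, d) := by
  classical
  have hab : a ≠ b := fun h => by rw [h] at hla; linarith [hcd.2.2.1]
  rcases lt_or_gt_of_ne hab with h | h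
  · obtain ⟨e1, e2, h1, h2, h3, h4⟩ := cover_lowhigh_lr hfP hcd
      (P.filter (fun z => a ≤ z ∧ z ≤ b)).card a b ha hb h le_rfl hla hhb
    exact ⟨e1, e2, h1, by linarith, by linarith, h4⟩
  · obtain ⟨e1, e2, h1, h2, h3, h4⟩ := cover_lowhigh_rl hfP hcd
      (P.filter (fun z => b ≤ z ∧ z ≤ a)).card a b ha hb h le_rfl hla hhb
    exact ⟨e1, e2, h1, by linarith, by linarith, h4⟩

lemma reflTransGen_nodup_chain {α : Type*} {r : α → α → Prop} {a b : α}
    (h : Relation.ReflTransGen r a b) :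
    ∃ L : List α, L.Chain' r ∧ L.head? = some a ∧ L.getLast? = some b ∧ L.Nodup := by
  induction h with
  | refl => exact ⟨[a], List.isChain_singleton a, rfl, rfl, List.nodup_singleton a⟩
  | tail hab hbc ih =>
    rename_i b' c
    obtain ⟨L, hchain, hhead, hlast, hnodup⟩ := ih
    by_cases hc : c ∈ L
    · -- cut at first occurrence of c
      obtain ⟨l₁, l₂, rfl⟩ := List.append_of_mem hc
      refine ⟨l₁ ++ [c], ?_, ?_, ?_, ?_⟩
      · exact hchain.prefix ⟨l₂, by simp⟩
      · rw [← hhead]; cases l₁ <;> simp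
      · simp
      · exact hnodup.sublist (by simp [List.sublist_append_left])
    · refine ⟨L ++ [c], ?_, ?_, ?_, ?_⟩
      · show List.IsChain r (L ++ [c])
        rw [List.isChain_append]
        refine ⟨hchain, List.isChain_singleton c, fun x hx y hy => ?_⟩
        rw [hlast] at hx
        simp at hx hy
        rw [← hx, ← hy]
        exact hbc
      · rw [← hhead]
        cases L with
        | nil => simp at hhead
        | cons h t => simp
      · simp
      · rw [List.nodup_append]
        exact ⟨hnodup, List.nodup_singleton c, fun a ha b hb hab => hc (by simp at hb; rw [← hb, ← hab]; exact ha)⟩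
theorem odd_period_forces_all_larger {f : ℝ → ℝ} (hf : Continuous f) {x : ℝ} {m : ℕ}
    (hm : Function.minimalPeriod f x = m) (hodd : Odd m) (hm1 : 1 < m) :
    ∀ t, m < t → ∃ y, Function.minimalPeriod f y = t := by
  classical
  have hm3 : 3 ≤ m := by
    rcases hodd with ⟨j, rfl⟩; omega
  have hxper : x ∈ periodicPts f := by
    rw [← minimalPeriod_pos_iff_mem_periodicPts, hm]; omega
  set P : Finset ℝ := (Finset.range m).image (fun i => f^[i] x) with hP
  have hmemP : ∀ z, z ∈ P ↔ ∃ i, i < m ∧ f^[i] x = z := by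
    intro z; simp [hP, Finset.mem_image]
  have hxP : x ∈ P := (hmemP x).2 ⟨0, by omega, rfl⟩
  have hfP : ∀ z ∈ P, f z ∈ P := by
    intro z hz
    obtain ⟨i, hi, rfl⟩ := (hmemP z).1 hz
    refine (hmemP _).2 ⟨(i+1) % m, Nat.mod_lt _ (by omega), ?_⟩
    rw [← hm, iterate_mod_minimalPeriod_eq]
    exact iterate_succ_apply' f i x
  have hmpP : ∀ z ∈ P, minimalPeriod f z = m := by
    intro z hz
    obtain ⟨i, hi, rfl⟩ := (hmemP z).1 hz
    rw [minimalPeriod_apply_iterate hxper, hm]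
  have hperP : ∀ z ∈ P, f^[m] z = z := by
    intro z hz
    have := hmpP z hz
    have hz' : z ∈ periodicPts f := by
      rw [← minimalPeriod_pos_iff_mem_periodicPts, this]; omega
    rw [← this]; exact iterate_minimalPeriod
  have hnfix : ∀ z ∈ P, f z ≠ z := by
    intro z hz h
    have h1 : minimalPeriod f z = 1 := minimalPeriod_eq_one_iff_isFixedPt.2 h
    rw [hmpP z hz] at h1; omega
  have hm1' : m - 1 + 1 = m := by omega
  have hinj : ∀ z ∈ P, ∀ w ∈ P, f z = f w → z = w := by
    intro z hz w hw h
    have h1 : f^[m-1] (f z) = z := by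
      have h0 := hperP z hz
      rw [← hm1', iterate_succ_apply] at h0
      exact h0
    have h2 : f^[m-1] (f w) = w := by
      have h0 := hperP w hw
      rw [← hm1', iterate_succ_apply] at h0
      exact h0
    rw [← h1, ← h2, h]
  have hcardP : P.card = m := by
    have hIJ : Set.InjOn (fun i => f^[i] x) ↑(Finset.range m) := by
      rw [Finset.coe_range, ← hm]
      exact iterate_injOn_Iio_minimalPeriod
    rw [hP, Finset.card_image_of_injOn hIJ, Finset.card_range]
  -- invariant subsets are everything
  have hinv : ∀ S : Finset ℝ, S ⊆ P → (∀ z ∈ S, f z ∈ S) → ∀ z₀ ∈ S, ∀ w ∈ P, w ∈ S := by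
    intro S hSP hSf z₀ hz₀ w hw
    have hiter : ∀ k, f^[k] z₀ ∈ S := by
      intro k; induction k with
      | zero => simpa using hz₀
      | succ k ih => rw [iterate_succ_apply']; exact hSf _ ih
    obtain ⟨i, hi, hiz⟩ := (hmemP z₀).1 (hSP hz₀)
    have hxS : x ∈ S := by
      have : f^[m-i] z₀ = x := by
        rw [← hiz, ← iterate_add_apply]
        have : m - i + i = m := by omega
        rw [this]
        exact hperP x hxP
      rw [← this]; exact hiter _
    obtain ⟨j, hj, hjw⟩ := (hmemP w).1 hw
    have hiter' : ∀ k, f^[k] x ∈ S := by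
      intro k; induction k with
      | zero => simpa using hxS
      | succ k ih => rw [iterate_succ_apply']; exact hSf _ ih
    rw [← hjw]; exact hiter' j
  -- construction of the central gap (p,q)
  have hPne : P.Nonempty := ⟨x, hxP⟩
  set F : Finset ℝ := P.filter (fun z => z < f z) with hF
  have hFne : F.Nonempty := by
    set z₀ := P.min' hPne with hz₀
    have hz₀P : z₀ ∈ P := P.min'_mem hPne
    refine ⟨z₀, Finset.mem_filter.2 ⟨hz₀P, ?_⟩⟩
    rcases lt_or_eq_of_le (P.min'_le (f z₀) (hfP z₀ hz₀P)) with h | h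
    · exact h
    · exact absurd h.symm (hnfix z₀ hz₀P)
  set p := F.max' hFne with hp
  have hpF : p ∈ F := F.max'_mem hFne
  have hpP : p ∈ P := (Finset.mem_filter.1 hpF).1
  have hpfp : p < f p := (Finset.mem_filter.1 hpF).2
  obtain ⟨q, hpq⟩ := gap_next hpP (hfP p hpP) hpfp
  have hqP : q ∈ P := hpq.2.1
  have hplq : p < q := hpq.2.2.1
  have hfpq : q ≤ f p := by
    rcases hpq.2.2.2 (f p) (hfP p hpP) with h | h
    · linarith
    · exact h
  have hfqp : f q ≤ p := by
    have hqF : q ∉ F := by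
      intro h
      have := F.le_max' q h
      rw [← hp] at this
      linarith
    have h1 : f q < q := by
      rcases lt_trichotomy (f q) q with h | h | h
      · exact h
      · exact absurd h (hnfix q hqP)
      · exact absurd (show q ∈ F from Finset.mem_filter.2 ⟨hqP, h⟩) hqF
    rcases hpq.2.2.2 (f q) (hfP q hqP) with h | h
    · exact h
    · linarith
  have hselfcov : Cov f (p, q) (p, q) := Or.inr ⟨hfqp, hfpq⟩
  -- the expanding-hull sequence K
  set S : ℝ × ℝ → Finset ℝ := fun ab => insert p (P.filter (fun z => ab.1 ≤ z ∧ z ≤ ab.2))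
    with hS
  have hSne : ∀ ab, (S ab).Nonempty := fun ab => ⟨p, Finset.mem_insert_self _ _⟩
  have hSsubP : ∀ ab, S ab ⊆ P := fun ab =>
    Finset.insert_subset hpP (Finset.filter_subset _ _)
  have hSmem : ∀ ab, ∀ z ∈ S ab, z ∈ P ∧ (z = p ∨ (ab.1 ≤ z ∧ z ≤ ab.2)) := by
    intro ab z hz
    rcases Finset.mem_insert.1 hz with h | h
    · exact ⟨h ▸ hpP, Or.inl h⟩
    · have := Finset.mem_filter.1 h
      exact ⟨this.1, Or.inr this.2⟩
  set T : ℝ × ℝ → Finset ℝ := fun ab => (S ab).image f with hT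
  have hTne : ∀ ab, (T ab).Nonempty := fun ab => (hSne ab).image f
  have hTsubP : ∀ ab, T ab ⊆ P := by
    intro ab z hz
    obtain ⟨w, hw, rfl⟩ := Finset.mem_image.1 hz
    exact hfP w (hSsubP ab hw)
  set step : ℝ × ℝ → ℝ × ℝ := fun ab => ((T ab).min' (hTne ab), (T ab).max' (hTne ab))
    with hstep
  set K : ℕ → ℝ × ℝ := fun n => step^[n] (p, q) with hK
  have hK0 : K 0 = (p, q) := rfl
  have hKsucc : ∀ n, K (n+1) = step (K n) := fun n => Function.iterate_succ_apply' step n (p,q)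
  -- basic invariants
  have hKP : ∀ n, (K n).1 ∈ P ∧ (K n).2 ∈ P := by
    intro n
    cases n with
    | zero => exact ⟨hpP, hqP⟩
    | succ n =>
      rw [hKsucc]
      exact ⟨hTsubP _ ((T (K n)).min'_mem (hTne _)), hTsubP _ ((T (K n)).max'_mem (hTne _))⟩
  have hqSK : ∀ n, (K n).1 ≤ p ∧ q ≤ (K n).2 → q ∈ S (K n) :=
    fun n h => Finset.mem_insert.2 (Or.inr (Finset.mem_filter.2
      ⟨hqP, le_trans h.1 hplq.le, h.2⟩))
  have hKpq : ∀ n, (K n).1 ≤ p ∧ q ≤ (K n).2 := by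
    intro n
    induction n with
    | zero => exact ⟨le_refl p, le_refl q⟩
    | succ n ih =>
      rw [hKsucc]
      constructor
      · calc (T (K n)).min' (hTne _) ≤ f q :=
              Finset.min'_le _ _ (Finset.mem_image_of_mem f (hqSK n ih))
          _ ≤ p := hfqp
      · calc q ≤ f p := hfpq
          _ ≤ (T (K n)).max' (hTne _) :=
              Finset.le_max' _ _ (Finset.mem_image_of_mem f (Finset.mem_insert_self _ _))
  have hKmono : ∀ n, (K (n+1)).1 ≤ (K n).1 ∧ (K n).2 ≤ (K (n+1)).2 := by
    intro n
    induction n with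
    | zero =>
      rw [hKsucc, hK0]
      constructor
      · calc (T (p,q)).min' (hTne _) ≤ f q :=
              Finset.min'_le _ _ (Finset.mem_image_of_mem f (hqSK 0 ⟨le_refl p, le_refl q⟩))
          _ ≤ p := hfqp
      · calc q ≤ f p := hfpq
          _ ≤ (T (p,q)).max' (hTne _) :=
              Finset.le_max' _ _ (Finset.mem_image_of_mem f (Finset.mem_insert_self _ _))
    | succ n ih =>
      have hSS : S (K n) ⊆ S (K (n+1)) := by
        intro z hz
        rcases Finset.mem_insert.1 hz with h | h
        · exact Finset.mem_insert.2 (Or.inl h)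
        · have h' := Finset.mem_filter.1 h
          exact Finset.mem_insert.2 (Or.inr (Finset.mem_filter.2
            ⟨h'.1, le_trans ih.1 h'.2.1, le_trans h'.2.2 ih.2⟩))
      have hTT : T (K n) ⊆ T (K (n+1)) := Finset.image_subset_image hSS
      have e2 : K (n+2) = step (K (n+1)) := hKsucc (n+1)
      have e1 : K (n+1) = step (K n) := hKsucc n
      constructor
      · calc (K (n+2)).1 = (T (K (n+1))).min' (hTne _) := by rw [e2]
          _ ≤ (T (K n)).min' (hTne _) := Finset.min'_subset (hTne _) hTT
          _ = (K (n+1)).1 := by rw [e1]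
      · calc (K (n+1)).2 = (T (K n)).max' (hTne _) := by rw [e1]
          _ ≤ (T (K (n+1))).max' (hTne _) := Finset.max'_subset (hTne _) hTT
          _ = (K (n+2)).2 := by rw [e2]
  -- reachability of gaps inside K n
  set Rel : ℝ × ℝ → ℝ × ℝ → Prop :=
    fun G H => IsGap P G.1 G.2 ∧ IsGap P H.1 H.2 ∧ Cov f G H with hRel
  have hreach : ∀ n, ∀ e1 e2, IsGap P e1 e2 → (K n).1 ≤ e1 → e2 ≤ (K n).2 →
      Relation.ReflTransGen Rel (p, q) (e1, e2) := by
    intro n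
    induction n with
    | zero =>
      intro e1 e2 hgap h1 h2
      rw [hK0] at h1 h2
      have he1 : e1 = p := by
        rcases hpq.2.2.2 e1 hgap.1 with h | h
        · linarith
        · exfalso; linarith [hgap.2.2.1]
      have he2 : e2 = q := by
        rcases hpq.2.2.2 e2 hgap.2.1 with h | h
        · exfalso; rw [he1] at hgap; linarith [hgap.2.2.1]
        · rcases hgap.2.2.2 q hqP with h' | h'
          · linarith [he1 ▸ hgap.2.2.1]
          · linarith
      rw [he1, he2]
    | succ n ih =>
      intro e1 e2 hgap h1 h2
      rw [hKsucc] at h1 h2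
      obtain ⟨a, haS, hfa⟩ := Finset.mem_image.1 ((T (K n)).min'_mem (hTne _))
      obtain ⟨b, hbS, hfb⟩ := Finset.mem_image.1 ((T (K n)).max'_mem (hTne _))
      have haP := (hSmem _ a haS).1
      have hbP := (hSmem _ b hbS).1
      have hbnds : ∀ z ∈ S (K n), (K n).1 ≤ z ∧ z ≤ (K n).2 := by
        intro z hz
        rcases (hSmem _ z hz).2 with h | h
        · rw [h]
          exact ⟨(hKpq n).1, le_trans hplq.le (hKpq n).2⟩
        · exact h
      obtain ⟨g1, g2, hg, hgl, hgr, hgcov⟩ := cover_of_lowhigh hfP hgap haP hbP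
        (by rw [hfa]; exact h1) (by rw [hfb]; exact h2)
        (hbnds a haS).1 (hbnds a haS).2 (hbnds b hbS).1 (hbnds b hbS).2
      exact Relation.ReflTransGen.tail (ih g1 g2 hg hgl hgr) ⟨hg, hgap, hgcov⟩
  -- stabilization: all of P eventually inside K N
  have hstab : ∃ N, ∀ z ∈ P, (K N).1 ≤ z ∧ z ≤ (K N).2 := by
    set c : ℕ → ℕ := fun n => (P.filter (fun z => (K n).1 ≤ z ∧ z ≤ (K n).2)).card with hc
    have hcsub : ∀ n, P.filter (fun z => (K n).1 ≤ z ∧ z ≤ (K n).2) ⊆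
        P.filter (fun z => (K (n+1)).1 ≤ z ∧ z ≤ (K (n+1)).2) := by
      intro n z hz
      have h := Finset.mem_filter.1 hz
      exact Finset.mem_filter.2 ⟨h.1, le_trans (hKmono n).1 h.2.1, le_trans h.2.2 (hKmono n).2⟩
    have hcbound : ∀ n, c n ≤ m := by
      intro n
      calc c n ≤ P.card := Finset.card_le_card (Finset.filter_subset _ _)
        _ = m := hcardP
    have hex : ∃ N, c N = c (N + 1) := by
      by_contra hne
      push_neg at hne
      have hsm : StrictMono c := strictMono_nat_of_lt_succ (fun n =>
        lt_of_le_of_ne (Finset.card_le_card (hcsub n)) (hne n))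
      have h5 : m + 1 ≤ c (m + 1) := hsm.le_apply
      have := hcbound (m + 1)
      omega
    obtain ⟨N, hN⟩ := hex
    have heqf : P.filter (fun z => (K N).1 ≤ z ∧ z ≤ (K N).2) =
        P.filter (fun z => (K (N+1)).1 ≤ z ∧ z ≤ (K (N+1)).2) :=
      Finset.eq_of_subset_of_card_le (hcsub N) (le_of_eq hN.symm)
    set SN := P.filter (fun z => (K N).1 ≤ z ∧ z ≤ (K N).2) with hSN
    have hSNf : ∀ z ∈ SN, f z ∈ SN := by
      intro z hz
      have h := Finset.mem_filter.1 hz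
      have hzS : z ∈ S (K N) := Finset.mem_insert.2 (Or.inr hz)
      have hfzT : f z ∈ T (K N) := Finset.mem_image_of_mem f hzS
      have h1 : (K (N+1)).1 ≤ f z := by rw [hKsucc]; exact Finset.min'_le _ _ hfzT
      have h2 : f z ≤ (K (N+1)).2 := by rw [hKsucc]; exact Finset.le_max' _ _ hfzT
      have hmem : f z ∈ P.filter (fun z => (K (N+1)).1 ≤ z ∧ z ≤ (K (N+1)).2) :=
        Finset.mem_filter.2 ⟨hfP z h.1, h1, h2⟩
      rw [← heqf] at hmem
      exact hmem
    have hpSN : p ∈ SN :=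
      Finset.mem_filter.2 ⟨hpP, (hKpq N).1, le_trans hplq.le (hKpq N).2⟩
    refine ⟨N, fun z hz => ?_⟩
    have := hinv SN (Finset.filter_subset _ _) hSNf p hpSN z hz
    exact (Finset.mem_filter.1 this).2
  obtain ⟨N, hKall⟩ := hstab
  have hreachall : ∀ e1 e2, IsGap P e1 e2 → Relation.ReflTransGen Rel (p, q) (e1, e2) :=
    fun e1 e2 hg => hreach N e1 e2 hg (hKall e1 hg.1).1 (hKall e2 hg.2.1).2
  -- parity: some other gap covers (p,q)
  have hGstar : ∃ g1 g2, IsGap P g1 g2 ∧ Cov f (g1, g2) (p, q) ∧ (g1, g2) ≠ (p, q) := by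
    by_contra hcon
    push_neg at hcon
    have hA : ∀ z ∈ P, z ≤ p → q ≤ f z := by
      intro z hz hzp
      by_contra hq
      push_neg at hq
      have hfzp : f z ≤ p := by
        rcases hpq.2.2.2 (f z) (hfP z hz) with h | h
        · exact h
        · linarith
      obtain ⟨e1, e2, hg, h1, h2, hcov⟩ := cover_of_lowhigh hfP hpq hz hpP hfzp hfpq
        (le_refl z) hzp hzp (le_refl p)
      have := hcon e1 e2 hg hcov
      have he2 : e2 = q := congrArg Prod.snd this
      linarith
    have hB : ∀ z ∈ P, q ≤ z → f z ≤ p := by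
      intro z hz hzq
      by_contra hp'
      push_neg at hp'
      have hfzq : q ≤ f z := by
        rcases hpq.2.2.2 (f z) (hfP z hz) with h | h
        · linarith
        · exact h
      obtain ⟨e1, e2, hg, h1, h2, hcov⟩ := cover_of_lowhigh hfP hpq hqP hz hfqp hfzq
        (le_refl q) hzq hzq (le_refl z)
      have := hcon e1 e2 hg hcov
      have he1 : e1 = p := congrArg Prod.fst this
      linarith
    set Plo := P.filter (fun z => z ≤ p) with hPlo
    set Phi := P.filter (fun z => q ≤ z) with hPhi
    have hcardlohi : Plo.card ≤ Phi.card := by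
      apply Finset.card_le_card_of_injOn f
      · intro z hz
        have h := Finset.mem_filter.1 hz
        exact Finset.mem_filter.2 ⟨hfP z h.1, hA z h.1 h.2⟩
      · intro z hz w hw h
        exact hinj z (Finset.mem_filter.1 hz).1 w (Finset.mem_filter.1 hw).1 h
    have hcardhilo : Phi.card ≤ Plo.card := by
      apply Finset.card_le_card_of_injOn f
      · intro z hz
        have h := Finset.mem_filter.1 hz
        exact Finset.mem_filter.2 ⟨hfP z h.1, hB z h.1 h.2⟩
      · intro z hz w hw h
        exact hinj z (Finset.mem_filter.1 hz).1 w (Finset.mem_filter.1 hw).1 h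
    have hdisj : Disjoint Plo Phi := by
      rw [Finset.disjoint_left]
      intro z hz hz'
      have h1 := (Finset.mem_filter.1 hz).2
      have h2 := (Finset.mem_filter.1 hz').2
      linarith
    have hunion : Plo ∪ Phi = P := by
      apply Finset.Subset.antisymm
      · exact Finset.union_subset (Finset.filter_subset _ _) (Finset.filter_subset _ _)
      · intro z hz
        rcases hpq.2.2.2 z hz with h | h
        · exact Finset.mem_union.2 (Or.inl (Finset.mem_filter.2 ⟨hz, h⟩))
        · exact Finset.mem_union.2 (Or.inr (Finset.mem_filter.2 ⟨hz, h⟩))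
    have hmeven : m = Plo.card + Phi.card := by
      rw [← hcardP, ← hunion, Finset.card_union_of_disjoint hdisj]
    have : Plo.card = Phi.card := le_antisymm hcardlohi hcardhilo
    rcases hodd with ⟨j, hj⟩
    omega
  obtain ⟨g1, g2, hgstar, hcovstar, hnestar⟩ := hGstar
  -- extract a duplicate-free covering cycle
  obtain ⟨L, hchain, hhead, hlast, hnodup⟩ := reflTransGen_nodup_chain (hreachall g1 g2 hgstar)
  have hLne : L ≠ [] := by intro h; rw [h] at hhead; simp at hhead
  obtain ⟨G0, L', rfl⟩ := List.exists_cons_of_ne_nil hLne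
  have hG0 : G0 = (p, q) := by simpa using hhead
  subst hG0
  set L : List (ℝ × ℝ) := (p, q) :: L' with hLdef
  set LL := L.length with hLL
  have hLL1 : 1 ≤ LL := by simp [hLL, hLdef]
  set C : ℕ → ℝ × ℝ := fun i => L.getD i (p, q) with hC
  have hCget : ∀ i (h : i < LL), C i = L.get ⟨i, h⟩ := by
    intro i h
    show L.getD i (p, q) = L.get ⟨i, h⟩
    rw [List.getD_eq_getElem L (p, q) h, List.get_eq_getElem]
  have hC0 : C 0 = (p, q) := rfl
  have hlast' : C (LL - 1) = (g1, g2) := by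
    have h1 : L.getLast (by simp [hLdef]) = (g1, g2) := by
      have := List.getLast?_eq_getLast (l := L) (by simp [hLdef])
      rw [this] at hlast
      exact Option.some_injective _ hlast
    rw [hCget (LL - 1) (by omega), ← h1, List.getLast_eq_getElem]
    rfl
  have hCchain : ∀ i, i + 1 < LL → Rel (C i) (C (i + 1)) := by
    intro i hi
    rw [hCget i (by omega), hCget (i+1) hi]
    exact List.isChain_iff_getElem.1 hchain i (by omega)
  have hCinj : ∀ i, i < LL → ∀ j, j < LL → C i = C j → i = j := by
    intro i hi j hj hij
    rw [hCget i hi, hCget j hj] at hij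
    have := List.nodup_iff_injective_get.1 hnodup hij
    exact congrArg Fin.val this
  have hLL2 : 2 ≤ LL := by
    rcases Nat.lt_or_ge LL 2 with h | h
    · exfalso
      have h1 : LL = 1 := by omega
      have := hlast'
      rw [h1] at this
      simp at this
      exact hnestar (by rw [← hC0, this])
    · exact h
  have hCgap : ∀ i, i < LL → IsGap P (C i).1 (C i).2 := by
    intro i hi
    rcases Nat.lt_or_ge (i + 1) LL with h | h
    · exact (hCchain i h).1
    · have hi1 : i = LL - 1 := by omega
      have := hCchain (LL - 2) (by omega)
      have h2 : LL - 2 + 1 = LL - 1 := by omega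
      rw [h2] at this
      rw [hi1]
      exact this.2.1
  -- length bound: LL ≤ m - 1
  have hLLm : LL ≤ m - 1 := by
    have hmapnodup : (L.map Prod.fst).Nodup := by
      apply hnodup.map_on
      intro G hG H hH hfst
      obtain ⟨i, hiG⟩ := List.get_of_mem hG
      obtain ⟨j, hjH⟩ := List.get_of_mem hH
      have hGg : IsGap P G.1 G.2 := by
        rw [← hiG, ← hCget i.1 i.2]; exact hCgap i.1 i.2
      have hHg : IsGap P H.1 H.2 := by
        rw [← hjH, ← hCget j.1 j.2]; exact hCgap j.1 j.2
      have := gap_right_unique (hfst ▸ hGg) hHg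
      exact Prod.ext hfst this
    have hsubE : (L.map Prod.fst).toFinset ⊆ P.erase (P.max' hPne) := by
      intro z hz
      rw [List.mem_toFinset, List.mem_map] at hz
      obtain ⟨G, hG, rfl⟩ := hz
      obtain ⟨i, hiG⟩ := List.get_of_mem hG
      have hGg : IsGap P G.1 G.2 := by
        rw [← hiG, ← hCget i.1 i.2]; exact hCgap i.1 i.2
      refine Finset.mem_erase.2 ⟨?_, hGg.1⟩
      intro hmax
      have h1 : G.2 ≤ P.max' hPne := P.le_max' G.2 hGg.2.1
      have := hGg.2.2.1
      rw [hmax] at this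
      linarith
    have h1 : (L.map Prod.fst).toFinset.card = LL := by
      rw [List.toFinset_card_of_nodup hmapnodup, List.length_map]
    have h2 := Finset.card_le_card hsubE
    rw [h1, Finset.card_erase_of_mem (P.max'_mem hPne), hcardP] at h2
    exact h2
  -- the itinerary loop for each t > m
  intro t ht
  have htLL : LL + 2 ≤ t := by omega
  set D : ℕ → ℝ × ℝ := fun j => if t - LL < j ∧ j < t then C (j - (t - LL)) else (p, q)
    with hD
  have hDgap : ∀ j, IsGap P (D j).1 (D j).2 := by
    intro j
    by_cases h : t - LL < j ∧ j < t
    · have e : D j = C (j - (t - LL)) := by simp only [hD]; rw [if_pos h]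
      rw [e]
      exact hCgap (j - (t - LL)) (by omega)
    · have e : D j = (p, q) := by simp only [hD]; rw [if_neg h]
      rw [e]
      exact hpq
  set A : ℕ → Set ℝ := fun j => Icc (D j).1 (D j).2 with hA
  have hAIcc : ∀ j, j ≤ t → ∃ u v, u ≤ v ∧ A j = Icc u v :=
    fun j _ => ⟨(D j).1, (D j).2, (hDgap j).2.2.1.le, rfl⟩
  have hDt : D t = (p, q) := if_neg (by omega)
  have hD0 : D 0 = (p, q) := if_neg (by omega)
  have hAn : A t = A 0 := by rw [hA]; simp only [hDt, hD0]
  have hcov : ∀ j, j < t → A (j+1) ⊆ f '' A j := by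
    intro j hj
    by_cases h1 : j < t - LL
    · have e1 : D j = (p, q) := if_neg (by omega)
      have e2 : D (j+1) = (p, q) := if_neg (by omega)
      show Icc (D (j+1)).1 (D (j+1)).2 ⊆ f '' Icc (D j).1 (D j).2
      rw [e1, e2]
      exact Cov.subset hf hselfcov hplq.le
    · by_cases h2 : j = t - LL
      · have e1 : D j = (p, q) := if_neg (by omega)
        have e2 : D (j+1) = C 1 := by
          have h3 : t - LL < j + 1 ∧ j + 1 < t := by omega
          have h4 : j + 1 - (t - LL) = 1 := by omega
          simp only [hD]; rw [if_pos h3, h4]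
        have edge := hCchain 0 (by omega)
        show Icc (D (j+1)).1 (D (j+1)).2 ⊆ f '' Icc (D j).1 (D j).2
        rw [e1, e2]
        rw [hC0] at edge
        exact Cov.subset hf edge.2.2 hplq.le
      · by_cases h3 : j + 1 < t
        · have h4 : t - LL < j ∧ j < t := by omega
          have h5 : t - LL < j + 1 ∧ j + 1 < t := by omega
          have e1 : D j = C (j - (t - LL)) := by simp only [hD]; rw [if_pos h4]
          have e2 : D (j+1) = C (j - (t - LL) + 1) := by
            have h6 : j + 1 - (t - LL) = j - (t - LL) + 1 := by omega
            simp only [hD]; rw [if_pos h5, h6]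
          have edge := hCchain (j - (t - LL)) (by omega)
          show Icc (D (j+1)).1 (D (j+1)).2 ⊆ f '' Icc (D j).1 (D j).2
          rw [e1, e2]
          exact Cov.subset hf edge.2.2 (hCgap (j - (t-LL)) (by omega)).2.2.1.le
        · have h4 : j + 1 = t := by omega
          have h5 : t - LL < j ∧ j < t := by omega
          have h6 : j - (t - LL) = LL - 1 := by omega
          have e1 : D j = C (LL - 1) := by simp only [hD]; rw [if_pos h5, h6]
          have e2 : D (j+1) = (p, q) := if_neg (by omega)
          show Icc (D (j+1)).1 (D (j+1)).2 ⊆ f '' Icc (D j).1 (D j).2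
          rw [e1, e2, hlast']
          exact Cov.subset hf hcovstar hgstar.2.2.1.le
  obtain ⟨y, hyt, hytrack⟩ := follow_loop hf A t (by omega) hAIcc hAn hcov
  have hyper : IsPeriodicPt f t y := hyt
  have hyperiodic : y ∈ periodicPts f := mk_mem_periodicPts (by omega) hyper
  set d := minimalPeriod f y with hd
  have hdpos : 0 < d := minimalPeriod_pos_of_mem_periodicPts hyperiodic
  have hddvd : d ∣ t := IsPeriodicPt.minimalPeriod_dvd hyper
  refine ⟨y, ?_⟩
  by_contra hne
  have hdlt : d < t := lt_of_le_of_ne (Nat.le_of_dvd (by omega) hddvd) hne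
  -- the point w = f^[t-1] y lies in two distinct gaps, hence in P
  have hw1 : f^[t-1] y ∈ A (t-1) := hytrack (t-1) (by omega)
  have hDt1 : D (t-1) = C (LL - 1) := by
    have h5 : t - LL < t - 1 ∧ t - 1 < t := by omega
    have h6 : t - 1 - (t - LL) = LL - 1 := by omega
    simp only [hD]; rw [if_pos h5, h6]
  have hperd : f^[d] y = y := iterate_minimalPeriod
  have hw2 : f^[t-1] y = f^[t-1-d] y := by
    have h7 : t - 1 = (t - 1 - d) + d := by omega
    conv_lhs => rw [h7]
    rw [iterate_add_apply, hperd]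
  have hw3 : f^[t-1] y ∈ A (t-1-d) := by rw [hw2]; exact hytrack _ (by omega)
  have hwP : f^[t-1] y ∈ P := by
    rw [hA] at hw1 hw3
    simp only [hDt1] at hw1
    by_cases hcase : t - LL < t - 1 - d
    · have h8 : t - 1 - d < t := by omega
      have e3 : D (t-1-d) = C (t - 1 - d - (t - LL)) := by
        simp only [hD]; rw [if_pos (And.intro hcase h8)]
      simp only [e3] at hw3
      set i2 := t - 1 - d - (t - LL) with hi2
      have hi2lt : i2 < LL - 1 := by omega
      refine gap_inter (hCgap i2 (by omega)) (hCgap (LL-1) (by omega)) ?_ hw3 hw1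
      intro hcomp
      have : C i2 = C (LL - 1) := by
        have h9 := congrArg Prod.fst hcomp
        have h10 := congrArg Prod.snd hcomp
        exact Prod.ext h9 h10
      have := hCinj i2 (by omega) (LL-1) (by omega) this
      omega
    · have e3 : D (t-1-d) = (p, q) := if_neg (by omega)
      simp only [e3] at hw3
      refine gap_inter hpq (hCgap (LL-1) (by omega)) ?_ hw3 hw1
      intro hcomp
      apply hnestar
      rw [← hlast']
      have h9 := congrArg Prod.fst hcomp
      have h10 := congrArg Prod.snd hcomp
      exact (Prod.ext h9 h10).symm
  have hyP : y ∈ P := by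
    have h11 : y = f (f^[t-1] y) := by
      have h13 : f^[t-1+1] y = y := by
        rw [show t - 1 + 1 = t by omega]; exact hyt
      rw [← Function.iterate_succ_apply' f (t-1) y]
      exact h13.symm
    rw [h11]
    exact hfP _ hwP
  have hdm : d = m := by rw [hd, hmpP y hyP]
  -- t ≥ 2m, so positions 0,1,2 are all in [p,q]
  obtain ⟨k, hk⟩ := hddvd
  have hk2 : 2 ≤ k := by
    rcases Nat.lt_or_ge k 2 with h | h
    · interval_cases k <;> omega
    · exact h
  have ht2m : 2 * m ≤ t := by
    rw [hk, hdm]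
    calc 2 * m = m * 2 := by ring
      _ ≤ m * k := Nat.mul_le_mul_left m hk2
  have h012 : ∀ j, j ≤ 2 → f^[j] y ∈ Icc p q := by
    intro j hj
    have e4 : D j = (p, q) := if_neg (by omega)
    have := hytrack j (by omega)
    rw [hA] at this
    simp only [e4] at this
    exact this
  have hitP : ∀ j : ℕ, f^[j] y ∈ P := by
    intro j
    induction j with
    | zero => simpa using hyP
    | succ j ih => rw [iterate_succ_apply']; exact hfP _ ih
  have hpq012 : ∀ j, j ≤ 2 → f^[j] y = p ∨ f^[j] y = q := by
    intro j hj
    have h13 := h012 j hj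
    rcases hpq.2.2.2 (f^[j] y) (hitP j) with h | h
    · left; exact le_antisymm h h13.1
    · right; exact le_antisymm h13.2 h
  have c1 : f y ≠ y := hnfix y hyP
  have c2 : f^[2] y ≠ y := by
    intro h
    have h14 : d ∣ 2 := IsPeriodicPt.minimalPeriod_dvd h
    have h15 := Nat.le_of_dvd (by omega) h14
    omega
  have c3 : f^[2] y ≠ f y := by
    intro h
    rw [show (2:ℕ) = 1 + 1 by rfl, iterate_add_apply, iterate_one] at h
    exact hnfix (f y) (hfP y hyP) h
  have hy0 := hpq012 0 (by omega)
  have hy1 := hpq012 1 (by omega)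
  have hy2 := hpq012 2 (by omega)
  rw [iterate_zero_apply] at hy0
  rw [iterate_one] at hy1
  rcases hy0 with h0 | h0 <;> rcases hy1 with h1 | h1 <;> rcases hy2 with h2 | h2 <;>
    first
      | exact c1 (h1.trans h0.symm)
      | exact c2 (h2.trans h0.symm)
      | exact c3 (h2.trans h1.symm)

lemma half_period {f : ℝ → ℝ} {x : ℝ} {n : ℕ} (hn : 0 < n)
    (h : minimalPeriod f x = 2 * n) : minimalPeriod (f^[2]) x = n := by
  have hxper : x ∈ periodicPts f := by
    rw [← minimalPeriod_pos_iff_mem_periodicPts, h]; omega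
  have h1 : IsPeriodicPt (f^[2]) n x := by
    show (f^[2])^[n] x = x
    rw [← iterate_mul, ← h]
    exact iterate_minimalPeriod
  have h2 : minimalPeriod (f^[2]) x ∣ n := h1.minimalPeriod_dvd
  have hgper : x ∈ periodicPts (f^[2]) := mk_mem_periodicPts hn h1
  have h3 : IsPeriodicPt f (2 * minimalPeriod (f^[2]) x) x := by
    show f^[2 * minimalPeriod (f^[2]) x] x = x
    rw [iterate_mul]
    exact iterate_minimalPeriod
  have h4 : 2 * n ∣ 2 * minimalPeriod (f^[2]) x := by
    rw [← h]; exact h3.minimalPeriod_dvd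
  have h5 : n ∣ minimalPeriod (f^[2]) x := (mul_dvd_mul_iff_left (two_ne_zero)).1 h4
  exact Nat.dvd_antisymm h2 h5

lemma main_induction : ∀ k : ℕ, ∀ f : ℝ → ℝ, Continuous f → ∀ (x : ℝ) (r : ℕ), Odd r → 1 < r →
    minimalPeriod f x = 2^k * r → ∀ s, r < s → ∃ y, minimalPeriod f y = 2^k * s := by
  intro k
  induction k with
  | zero =>
    intro f hf x r hr hr1 hmp s hs
    have h := odd_period_forces_all_larger hf (show minimalPeriod f x = r by simpa using hmp)
      hr hr1 s hs
    simpa using h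
  | succ k ih =>
    intro f hf x r hr hr1 hmp s hs
    have hs1 : 1 < s := lt_trans hr1 hs
    set g := f^[2] with hg
    have hgc : Continuous g := by
      rw [hg]
      show Continuous (f^[2])
      rw [Function.iterate_succ, Function.iterate_one]
      exact hf.comp hf
    have hgx : minimalPeriod g x = 2^k * r :=
      half_period (by positivity) (by rw [hmp, pow_succ]; ring)
    obtain ⟨y, hy⟩ := ih g hgc x r hr hr1 hgx s hs
    have hyg : y ∈ periodicPts g := by
      rw [← minimalPeriod_pos_iff_mem_periodicPts, hy]; positivity
    have h1 : IsPeriodicPt f (2 * (2^k * s)) y := by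
      show f^[2 * (2^k * s)] y = y
      rw [iterate_mul, ← hy]
      exact iterate_minimalPeriod
    have hyf : y ∈ periodicPts f := mk_mem_periodicPts (by positivity) h1
    set n := minimalPeriod f y with hn
    have hndvd : n ∣ 2 * (2^k * s) := h1.minimalPeriod_dvd
    have h2 : IsPeriodicPt g n y := by
      show (f^[2])^[n] y = y
      have hfn : f^[n] y = y := iterate_minimalPeriod
      rw [← iterate_mul, two_mul, iterate_add_apply, hfn, hfn]
    have h3 : 2^k * s ∣ n := by rw [← hy]; exact h2.minimalPeriod_dvd
    obtain ⟨c, hc⟩ := h3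
    have hc2 : c ∣ 2 := by
      have h4 := hndvd
      rw [hc, mul_comm 2 (2^k * s)] at h4
      exact (mul_dvd_mul_iff_left (show (2:ℕ)^k * s ≠ 0 by positivity)).1 h4
    rcases (Nat.dvd_prime Nat.prime_two).1 hc2 with hc1 | hc1
    · -- n = 2^k * s : need 2^k * s odd, i.e. k = 0 and s odd
      rw [hc1, mul_one] at hc
      by_cases hodd : Odd (2^k * s)
      · -- k = 0 and s odd
        have hk0 : k = 0 := by
          by_contra hk
          have : (2:ℕ) ∣ 2^k * s := Dvd.dvd.mul_right (dvd_pow_self 2 hk) s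
          rw [Nat.odd_iff] at hodd
          omega
        have hsodd : Odd s := by
          rw [hk0] at hodd; simpa using hodd
        have hys : minimalPeriod f y = s := by rw [← hn, hc, hk0]; simp
        obtain ⟨z, hz⟩ := odd_period_forces_all_larger hf hys hsodd hs1 (2*s) (by omega)
        refine ⟨z, ?_⟩
        rw [hz, hk0, pow_succ]
        ring
      · exfalso
        rw [Nat.odd_iff] at hodd
        have heven : 2 ∣ 2^k * s := by omega
        obtain ⟨u, hu⟩ := heven
        have h2ks : 0 < 2^k * s := by positivity
        have hu0 : 0 < u := by omega
        have h5 : IsPeriodicPt g u y := by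
          show (f^[2])^[u] y = y
          rw [← iterate_mul, ← hu, ← hc]
          exact iterate_minimalPeriod
        have h6 : 2^k * s ∣ u := by rw [← hy]; exact h5.minimalPeriod_dvd
        have h7 := Nat.le_of_dvd hu0 h6
        omega
    · refine ⟨y, ?_⟩
      rw [← hn, hc, hc1, pow_succ]
      ring

theorem odd_times_power_forces_larger (f : ℝ → ℝ) (hf : Continuous f)
    (k r : ℕ) (hr : Odd r) (hr1 : 1 < r)
    (x : ℝ) (hx : f^[2 ^ k * r] x = x)
    (hx' : ∀ j : ℕ, 0 < j → j < 2 ^ k * r → f^[j] x ≠ x) :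
    ∀ s : ℕ, r < s →
      ∃ y : ℝ, f^[2 ^ k * s] y = y ∧
        ∀ j : ℕ, 0 < j → j < 2 ^ k * s → f^[j] y ≠ y := by
  intro s hs
  have hn : 0 < 2^k * r := by positivity
  have hper : IsPeriodicPt f (2^k * r) x := hx
  have hxper : x ∈ periodicPts f := mk_mem_periodicPts hn hper
  have hmp : minimalPeriod f x = 2^k * r := by
    have h1 : minimalPeriod f x ∣ 2^k * r := hper.minimalPeriod_dvd
    have hpos := minimalPeriod_pos_of_mem_periodicPts hxper
    rcases lt_or_eq_of_le (Nat.le_of_dvd hn h1) with h | h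
    · exact absurd iterate_minimalPeriod (hx' _ hpos h)
    · exact h
  obtain ⟨y, hy⟩ := main_induction k f hf x r hr hr1 hmp s hs
  refine ⟨y, ?_, ?_⟩
  · rw [← hy]; exact iterate_minimalPeriod
  · intro j hj hjlt h
    rw [← hy] at hjlt
    exact not_isPeriodicPt_of_pos_of_lt_minimalPeriod (by omega) hjlt h
end
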